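/- arXiv:2309.02413 — 9 statements merged into one kernel-verified Lean document; each statement's English description precedes it below -/
import Mathlib

section
/- With β as above, β(x,y)·β(y,x) = 1 if and only if y = c·x for some c > 0 (x and y are collinear). -/
open scoped ENNReal

/-- The Birkhoff coefficient `β(x,y) = inf {r > 0 : r • x - y ∈ C}`, valued in `ℝ≥0∞`. -/
noncomputable def hilbertBeta {X : Type*} [AddCommGroup X] [Module ℝ X]
    (C : Set X) (x y : X) : ℝ≥0∞ :=
  sInf {e : ℝ≥0∞ | ∃ r : ℝ, 0 < r ∧ e = ENNReal.ofReal r ∧ r • x - y ∈ C}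

/-!
If `β(x,y) β(y,x) = 1`, both coefficients are finite and, `C` being closed, the infima are
attained: `a • x - y ∈ C` and `b • y - x ∈ C` with `a b = 1`. Scaling the second by `a` gives
`y - a • x ∈ C`, so `a • x - y ∈ C ∩ -C = {0}`. Conversely `β(x, c • x) = c`, since
`(r - c) • x ∈ C` with `r < c` would put a nonzero multiple of `x` in `C ∩ -C`.
-/

open Set

lemma eq_zero_of_mem_of_neg_mem {X : Type*} [AddGroup X] {C : Set X}
    (hproper : C ∩ (-C) = {0}) {z : X} (hz : z ∈ C) (hz' : -z ∈ C) : z = 0 := by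
  have : z ∈ C ∩ (-C) := ⟨hz, hz'⟩
  rwa [hproper] at this

section Birkhoff

variable {X : Type*} [AddCommGroup X] [Module ℝ X] {C : Set X} {x y : X}

lemma hilbertBeta_eq_sInf_image (C : Set X) (x y : X) :
    hilbertBeta C x y = sInf (ENNReal.ofReal '' {r : ℝ | 0 < r ∧ r • x - y ∈ C}) := by
  rw [hilbertBeta]
  congr 1
  ext e
  constructor
  · rintro ⟨r, hr, rfl, hmem⟩
    exact ⟨r, ⟨hr, hmem⟩, rfl⟩
  · rintro ⟨r, ⟨hr, hmem⟩, rfl⟩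
    exact ⟨r, hr, rfl, hmem⟩

lemma hilbertBeta_le {r : ℝ} (hr : 0 < r) (h : r • x - y ∈ C) :
    hilbertBeta C x y ≤ ENNReal.ofReal r :=
  sInf_le ⟨r, hr, rfl, h⟩

lemma nonempty_of_hilbertBeta_ne_top (h : hilbertBeta C x y ≠ ∞) :
    {r : ℝ | 0 < r ∧ r • x - y ∈ C}.Nonempty := by
  rw [hilbertBeta_eq_sInf_image] at h
  by_contra hS
  rw [not_nonempty_iff_eq_empty.1 hS, image_empty, sInf_empty] at h
  exact h rfl

lemma hilbertBeta_toReal_eq_sInf (h : hilbertBeta C x y ≠ ∞) :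
    (hilbertBeta C x y).toReal = sInf {r : ℝ | 0 < r ∧ r • x - y ∈ C} := by
  have hS := nonempty_of_hilbertBeta_ne_top h
  rw [hilbertBeta_eq_sInf_image, ← Monotone.map_csInf_of_continuousAt
    ENNReal.continuous_ofReal.continuousAt ENNReal.ofReal_mono hS ⟨0, fun r hr => hr.1.le⟩]
  exact ENNReal.toReal_ofReal (Real.sInf_nonneg fun r hr => hr.1.le)

lemma hilbertBeta_toReal_smul_sub_mem [TopologicalSpace X] [IsTopologicalAddGroup X]
    [ContinuousSMul ℝ X] (hC : IsClosed C) (h : hilbertBeta C x y ≠ ∞) :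
    (hilbertBeta C x y).toReal • x - y ∈ C := by
  have hS := nonempty_of_hilbertBeta_ne_top h
  have hclosed : IsClosed {r : ℝ | r • x - y ∈ C} := hC.preimage (by fun_prop)
  rw [hilbertBeta_toReal_eq_sInf h]
  exact closure_minimal (fun r hr => hr.2) hclosed
    (csInf_mem_closure hS ⟨0, fun r hr => hr.1.le⟩)

lemma eq_smul_of_smul_sub_mem (hsmul : ∀ r : ℝ, 0 ≤ r → ∀ x ∈ C, r • x ∈ C)
    (hproper : C ∩ (-C) = {0}) {a b : ℝ} (ha : 0 ≤ a) (hab : a * b = 1)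
    (h₁ : a • x - y ∈ C) (h₂ : b • y - x ∈ C) : y = a • x := by
  have h₃ : y - a • x ∈ C := by
    simpa only [smul_sub, smul_smul, hab, one_smul] using hsmul a ha _ h₂
  exact (sub_eq_zero.1 (eq_zero_of_mem_of_neg_mem hproper h₁ (by rwa [neg_sub]))).symm

lemma hilbertBeta_smul_self (hsmul : ∀ r : ℝ, 0 ≤ r → ∀ x ∈ C, r • x ∈ C)
    (hproper : C ∩ (-C) = {0}) (hx : x ∈ C) (hx0 : x ≠ 0) {c : ℝ} (hc : 0 < c) :
    hilbertBeta C x (c • x) = ENNReal.ofReal c := by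
  refine le_antisymm (hilbertBeta_le hc ?_) (le_sInf ?_)
  · simpa using hsmul 0 le_rfl x hx
  · rintro _ ⟨r, -, rfl, hmem⟩
    refine ENNReal.ofReal_le_ofReal (not_lt.1 fun hrc => ?_)
    have hzero : (r - c) • x = 0 := by
      refine eq_zero_of_mem_of_neg_mem hproper (by rwa [sub_smul]) ?_
      rw [← neg_smul, neg_sub]
      exact hsmul _ (by linarith) x hx
    rcases smul_eq_zero.1 hzero with h | h
    · linarith [sub_eq_zero.1 h]
    · exact hx0 h

end Birkhoff

theorem stmt1_general {X : Type*} [AddCommGroup X] [Module ℝ X] [TopologicalSpace X]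
    [IsTopologicalAddGroup X] [ContinuousSMul ℝ X]
    (C : Set X) (hCclosed : IsClosed C)
    (hsmul : ∀ r : ℝ, 0 ≤ r → ∀ x ∈ C, r • x ∈ C)
    (hproper : C ∩ (-C) = {0})
    (x y : X) (hx : x ∈ C \ {0}) :
    hilbertBeta C x y * hilbertBeta C y x = 1 ↔ ∃ c : ℝ, 0 < c ∧ y = c • x := by
  constructor
  · intro h
    have hxy0 := left_ne_zero_of_mul_eq_one h
    have hxy := (ENNReal.lt_top_of_mul_ne_top_left (h ▸ ENNReal.one_ne_top)
      (right_ne_zero_of_mul_eq_one h)).ne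
    have hyx := (ENNReal.lt_top_of_mul_ne_top_right (h ▸ ENNReal.one_ne_top) hxy0).ne
    have hab : (hilbertBeta C x y).toReal * (hilbertBeta C y x).toReal = 1 := by
      rw [← ENNReal.toReal_mul, h, ENNReal.toReal_one]
    refine ⟨_, ENNReal.toReal_pos hxy0 hxy, eq_smul_of_smul_sub_mem hsmul hproper
      ENNReal.toReal_nonneg hab (hilbertBeta_toReal_smul_sub_mem hCclosed hxy)
      (hilbertBeta_toReal_smul_sub_mem hCclosed hyx)⟩
  · rintro ⟨c, hc, rfl⟩
    have hx0 : x ≠ 0 := hx.2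
    have hcx := hilbertBeta_smul_self hsmul hproper (hsmul c hc.le x hx.1)
      (smul_ne_zero hc.ne' hx0) (inv_pos.2 hc)
    rw [smul_smul, inv_mul_cancel₀ hc.ne', one_smul] at hcx
    rw [hilbertBeta_smul_self hsmul hproper hx.1 hx0 hc, hcx, ← ENNReal.ofReal_mul hc.le,
      mul_inv_cancel₀ hc.ne', ENNReal.ofReal_one]

/-- `β(x,y) · β(y,x) = 1` if and only if `y = c • x` for some `c > 0`
(i.e. `x` and `y` are collinear). -/
theorem stmt1 {X : Type*} [AddCommGroup X] [Module ℝ X] [TopologicalSpace X]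
    [IsTopologicalAddGroup X] [ContinuousSMul ℝ X] [LocallyConvexSpace ℝ X]
    (C : Set X) (hCclosed : IsClosed C)
    (hadd : ∀ x ∈ C, ∀ y ∈ C, x + y ∈ C)
    (hsmul : ∀ r : ℝ, 0 ≤ r → ∀ x ∈ C, r • x ∈ C)
    (hproper : C ∩ (-C) = {0})
    (x y : X) (hx : x ∈ C \ {0}) (hy : y ∈ C \ {0}) :
    hilbertBeta C x y * hilbertBeta C y x = 1 ↔ ∃ c : ℝ, 0 < c ∧ y = c • x :=
  stmt1_general C hCclosed hsmul hproper x y hx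
end

section
/- For x, y ∈ C \ {0}, β(x,y) = sup{⟨f, y⟩/⟨f, x⟩ : f ∈ C*, ⟨f, x⟩ ≠ 0}, where C* is the dual cone. -/
/-!
For `f ∈ C*` with `f x > 0`, every `0 < r < f y / f x` has `f (r • x - y) < 0`, so `r • x - y ∉ C`.
Conversely, if `r • x - y ∉ C`, Hahn–Banach gives `f ∈ C*` with `r * f x < f y`; when `f x = 0`
this says nothing about a ratio, but since `C` is proper and `x ≠ 0` some `g ∈ C*` has `g x > 0`,
and `f + t • g` for small `t > 0` still satisfies the strict inequality while being positive at `x`.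
-/

open scoped ENNReal

/-- The Birkhoff coefficient in its `sup` form:
`β(x,y) = sup {r > 0 : r • x - y ∉ C}`, valued in `ℝ≥0∞`. -/
noncomputable def hilbertBetaSup {X : Type*} [AddCommGroup X] [Module ℝ X]
    (C : Set X) (x y : X) : ℝ≥0∞ :=
  sSup {e : ℝ≥0∞ | ∃ r : ℝ, 0 < r ∧ e = ENNReal.ofReal r ∧ r • x - y ∉ C}

section

variable {X : Type*} [AddCommGroup X] [Module ℝ X] [TopologicalSpace X]

def ProperCone.ofIsClosed (C : Set X) (hC : IsClosed C) (h0 : (0 : X) ∈ C)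
    (hadd : ∀ x ∈ C, ∀ y ∈ C, x + y ∈ C) (hsmul : ∀ r : ℝ, 0 ≤ r → ∀ x ∈ C, r • x ∈ C) :
    ProperCone ℝ X where
  carrier := C
  add_mem' ha hb := hadd _ ha _ hb
  zero_mem' := h0
  smul_mem' c _ hx := hsmul c c.2 _ hx
  isClosed' := hC

theorem ofReal_div_le_hilbertBetaSup {C : Set X} {f : X →L[ℝ] ℝ} (hf : ∀ z ∈ C, 0 ≤ f z)
    {x : X} (hfx : 0 < f x) (y : X) :
    ENNReal.ofReal (f y / f x) ≤ hilbertBetaSup C x y := by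
  refine le_of_forall_lt fun c hc => ?_
  obtain ⟨r, -, hcr, hrR⟩ := ENNReal.lt_iff_exists_real_btwn.1 hc
  have hr : 0 < r := ENNReal.ofReal_pos.1 (hcr.trans_le' bot_le)
  have hry : r * f x < f y := (lt_div_iff₀ hfx).1 (ENNReal.ofReal_lt_ofReal_iff'.1 hrR).1
  refine hcr.trans_le <| le_sSup ⟨r, hr, rfl, fun hmem => ?_⟩
  have := hf _ hmem
  simp only [map_sub, map_smul, smul_eq_mul] at this
  linarith

theorem exists_dual_pos_and_smul_lt {C : Set X} {f g : X →L[ℝ] ℝ} (hf : ∀ z ∈ C, 0 ≤ f z)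
    (hg : ∀ z ∈ C, 0 ≤ g z) {x y : X} (hx : x ∈ C) (hgx : 0 < g x) {r : ℝ}
    (hr : r * f x < f y) :
    ∃ h : X →L[ℝ] ℝ, (∀ z ∈ C, 0 ≤ h z) ∧ 0 < h x ∧ r * h x < h y := by
  obtain ⟨t, ht, hsmall⟩ := exists_pos_mul_lt (sub_pos.2 hr) (r * g x - g y)
  refine ⟨f + t • g, fun z hz => ?_, ?_, ?_⟩ <;>
    simp only [add_apply, smul_apply, smul_eq_mul]
  · exact add_nonneg (hf z hz) (mul_nonneg ht.le (hg z hz))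
  · exact add_pos_of_nonneg_of_pos (hf x hx) (mul_pos ht hgx)
  · linarith

end

theorem stmt4_general {X : Type*} [AddCommGroup X] [Module ℝ X] [TopologicalSpace X]
    [IsTopologicalAddGroup X] [ContinuousSMul ℝ X] [LocallyConvexSpace ℝ X]
    (C : Set X) (hCclosed : IsClosed C)
    (hadd : ∀ x ∈ C, ∀ y ∈ C, x + y ∈ C)
    (hsmul : ∀ r : ℝ, 0 ≤ r → ∀ x ∈ C, r • x ∈ C)
    (hproper : C ∩ (-C) = {0})
    (x y : X) (hx : x ∈ C \ {0}) :
    hilbertBetaSup C x y =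
      sSup {e : ℝ≥0∞ | ∃ f : X →L[ℝ] ℝ, (∀ z ∈ C, 0 ≤ f z) ∧ f x ≠ 0 ∧
        e = ENNReal.ofReal (f y / f x)} := by
  let K := ProperCone.ofIsClosed C hCclosed (hproper.ge rfl).1 hadd hsmul
  have hnx : -x ∉ K := fun h => hx.2 <| hproper.subset ⟨hx.1, h⟩
  obtain ⟨g, hg, hgx⟩ := K.hyperplane_separation_point hnx
  replace hgx : 0 < g x := by simpa using hgx
  apply le_antisymm
  · refine sSup_le fun _ ⟨r, _, hre, hr⟩ => ?_
    obtain ⟨f, hf, hfr⟩ := K.hyperplane_separation_point (x₀ := r • x - y) hr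
    obtain ⟨h, hh, hhx, hhr⟩ := exists_dual_pos_and_smul_lt hf hg hx.1 hgx
      (by simpa [sub_neg] using hfr)
    exact hre ▸ le_sSup_of_le ⟨h, hh, hhx.ne', rfl⟩
      (ENNReal.ofReal_le_ofReal <| (le_div_iff₀ hhx).2 hhr.le)
  · refine sSup_le fun _ ⟨f, hf, hfx, hfe⟩ => ?_
    exact hfe ▸ ofReal_div_le_hilbertBetaSup hf ((hf x hx.1).lt_of_ne' hfx) y

/-- Dual characterization: for `x, y ∈ C \ {0}`,
`β(x,y) = sup {⟨f,y⟩/⟨f,x⟩ : f ∈ C*, ⟨f,x⟩ ≠ 0}`. -/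
theorem stmt4 {X : Type*} [AddCommGroup X] [Module ℝ X] [TopologicalSpace X]
    [IsTopologicalAddGroup X] [ContinuousSMul ℝ X] [LocallyConvexSpace ℝ X]
    (C : Set X) (hCclosed : IsClosed C)
    (hadd : ∀ x ∈ C, ∀ y ∈ C, x + y ∈ C)
    (hsmul : ∀ r : ℝ, 0 ≤ r → ∀ x ∈ C, r • x ∈ C)
    (hproper : C ∩ (-C) = {0})
    (x y : X) (hx : x ∈ C \ {0}) (hy : y ∈ C \ {0}) :
    hilbertBetaSup C x y =
      sSup {e : ℝ≥0∞ | ∃ f : X →L[ℝ] ℝ, (∀ z ∈ C, 0 ≤ f z) ∧ f x ≠ 0 ∧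
        e = ENNReal.ofReal (f y / f x)} :=
  stmt4_general C hCclosed hadd hsmul hproper x y hx
end

section
/- If L : X → X is linear and maps C \ {0} into C \ {0}, where C is a proper closed convex cone, then T(Lx, Ly) ≤ τ(L) · T(x,y) for all x, y ∈ C \ {0}, where T(x,y) = tanh(H(x,y)/4) (with tanh(∞):=1) and τ(L) = sup over x,y ∈ C\{0} of T(Lx, Ly). -/
open scoped ENNReal

/-- The Hilbert projective distance `H(x,y) = log (β(x,y) β(y,x)) ∈ [0,∞]`. -/
noncomputable def hilbertDist {X : Type*} [AddCommGroup X] [Module ℝ X]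
    (C : Set X) (x y : X) : EReal :=
  ENNReal.log (hilbertBeta C x y * hilbertBeta C y x)

open scoped Classical in
/-- The `𝒯`-distance `𝒯(x,y) = tanh (H(x,y)/4)`, with the convention `tanh ∞ := 1`. -/
noncomputable def tanhDist {X : Type*} [AddCommGroup X] [Module ℝ X]
    (C : Set X) (x y : X) : ℝ :=
  if hilbertDist C x y = ⊤ then 1 else Real.tanh ((hilbertDist C x y).toReal / 4)

/-!
When `H(x, y) < ∞`, closedness of `C` makes the infima `a = β(x, y)` and `b = β(y, x)` attained,
so `u = a x - y` and `v = b y - x` lie in `C`, and `L u = a Lx - Ly`, `L v = b Ly - Lx`. With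
`B₁ = β(Lu, Lv)` one has `B₁ Lu - Lv = (b + B₁) (r Lx - Ly)` for `r = (1 + a B₁) / (b + B₁)`, so
`β(Lx, Ly) ≤ r`, and symmetrically for `β(Ly, Lx)`. As `tanh (log (s²) / 4) = (s - 1) / (s + 1)`,
what remains is an inequality between rational functions of `s = √(ab)` and `t = √(B₁B₂)`, which
comes down to AM-GM for `a B₁` and `b B₂`.
-/

open Real

namespace Real

lemma tanh_le_tanh {a b : ℝ} (h : a ≤ b) : tanh a ≤ tanh b := by
  rwa [← artanh_le_artanh_iff ⟨neg_one_lt_tanh a, tanh_lt_one a⟩ ⟨neg_one_lt_tanh b, tanh_lt_one b⟩,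
    artanh_tanh, artanh_tanh]

lemma tanh_log_sq_div_four {u : ℝ} (hu : 0 < u) : tanh (log (u ^ 2) / 4) = (u - 1) / (u + 1) := by
  have hexp : exp (log (u ^ 2) / 4) ^ 2 = u := by
    rw [← exp_nat_mul, log_pow, exp_eq_exp.2 (show _ = log u by push_cast; ring), exp_log hu]
  generalize log (u ^ 2) / 4 = y at hexp
  subst hexp
  have := exp_pos y
  rw [tanh_eq, exp_neg]
  field_simp

lemma tanh_log_div_four_le_mul {a b B₁ B₂ : ℝ} (ha : 0 < a) (hb : 0 < b) (hB₁ : 0 < B₁)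
    (hB₂ : 0 < B₂) (hab : 1 ≤ a * b) (hB : 1 ≤ B₁ * B₂) :
    tanh (log ((1 + a * B₁) / (b + B₁) * ((1 + b * B₂) / (a + B₂))) / 4) ≤
      tanh (log (B₁ * B₂) / 4) * tanh (log (a * b) / 4) := by
  obtain ⟨s, hs0, hs⟩ : ∃ s, 0 ≤ s ∧ s ^ 2 = a * b :=
    ⟨√(a * b), sqrt_nonneg _, sq_sqrt (by positivity)⟩
  obtain ⟨t, ht0, ht⟩ : ∃ t, 0 ≤ t ∧ t ^ 2 = B₁ * B₂ :=
    ⟨√(B₁ * B₂), sqrt_nonneg _, sq_sqrt (by positivity)⟩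
  have hs1 : 1 ≤ s := by nlinarith
  have ht1 : 1 ≤ t := by nlinarith
  have amgm : 2 * (s * t) ≤ a * B₁ + b * B₂ :=
    le_of_pow_le_pow_left₀ two_ne_zero (by positivity)
      (by nlinarith [sq_nonneg (a * B₁ - b * B₂)])
  have key : (1 + a * B₁) / (b + B₁) * ((1 + b * B₂) / (a + B₂)) ≤ ((s * t + 1) / (s + t)) ^ 2 := by
    rw [div_mul_div_comm, div_pow, div_le_div_iff₀ (by positivity) (by positivity)]
    -- modulo `s² = ab` and `t² = B₁B₂`, the difference of the two sides is
    -- `(ab - 1)(B₁B₂ - 1)(aB₁ + bB₂ - 2st)`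
    linear_combination
      mul_nonneg (mul_nonneg (sub_nonneg.2 hab) (sub_nonneg.2 hB)) (sub_nonneg.2 amgm) +
      (1 + a * B₁ + b * B₂ + a * b * (B₁ * B₂) - t ^ 2 * (a * b + B₁ * B₂ + a * B₁ + b * B₂)) * hs +
      (1 + a * B₁ + b * B₂ + a * b * (B₁ * B₂) - a * b * (a * b + B₁ * B₂ + a * B₁ + b * B₂)) * ht
  calc _ ≤ tanh (log (((s * t + 1) / (s + t)) ^ 2) / 4) :=
        tanh_le_tanh (by gcongr)
    _ = (t - 1) / (t + 1) * ((s - 1) / (s + 1)) := by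
        rw [tanh_log_sq_div_four (by positivity)]
        field_simp
        ring
    _ = _ := by
        rw [← hs, ← ht, tanh_log_sq_div_four (by positivity), tanh_log_sq_div_four (by positivity)]

end Real

section Cone

variable {X : Type*} [AddCommGroup X] [Module ℝ X] {C : Set X} {x y p q : X} {a b : ℝ}

lemma mem_of_smul_mem (hsmul : ∀ r : ℝ, 0 ≤ r → ∀ x ∈ C, r • x ∈ C) (ha : 0 < a)
    (h : a • x ∈ C) : x ∈ C := by
  simpa [ha.ne'] using hsmul a⁻¹ (inv_nonneg.2 ha.le) _ h

lemma one_le_mul_of_smul_sub_mem (hadd : ∀ x ∈ C, ∀ y ∈ C, x + y ∈ C)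
    (hsmul : ∀ r : ℝ, 0 ≤ r → ∀ x ∈ C, r • x ∈ C) (hproper : C ∩ -C = {0})
    (hx : x ∈ C \ {0}) (hb : 0 ≤ b) (hxy : a • x - y ∈ C) (hyx : b • y - x ∈ C) : 1 ≤ a * b := by
  by_contra! hab
  have hsum : (1 - a * b) • -x ∈ C := by
    convert hadd _ (hsmul b hb _ hxy) _ hyx using 1
    module
  exact hx.2 (hproper.subset ⟨hx.1, show -x ∈ C from mem_of_smul_mem hsmul (by linarith) hsum⟩)

lemma hilbertBeta_le_ofReal (ha : 0 < a) (h : a • x - y ∈ C) :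
    hilbertBeta C x y ≤ ENNReal.ofReal a :=
  sInf_le ⟨a, ha, rfl, h⟩

lemma hilbertBeta_le_of_smul_sub_mem (hsmul : ∀ r : ℝ, 0 ≤ r → ∀ x ∈ C, r • x ∈ C)
    {B : ℝ} (ha : 0 ≤ a) (hb : 0 < b) (hB : 0 ≤ B) (h : B • (a • p - q) - (b • q - p) ∈ C) :
    hilbertBeta C p q ≤ ENNReal.ofReal ((1 + a * B) / (b + B)) := by
  have hbB : 0 < b + B := by linarith
  refine hilbertBeta_le_ofReal (by positivity) (mem_of_smul_mem hsmul hbB ?_)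
  convert h using 1
  rw [smul_sub, smul_smul, mul_div_cancel₀ _ hbB.ne']
  module

lemma mul_le_one_of_hilbertBeta_eq (h0 : (0 : X) ∈ C) (ha : 0 < a)
    (hβ : hilbertBeta C y x = ENNReal.ofReal b) (hxy : a • x = y) : a * b ≤ 1 := by
  have hle : hilbertBeta C y x ≤ ENNReal.ofReal a⁻¹ :=
    hilbertBeta_le_ofReal (inv_pos.2 ha) (by rwa [← hxy, inv_smul_smul₀ ha.ne', sub_self])
  rw [hβ, ENNReal.ofReal_le_ofReal_iff (inv_nonneg.2 ha.le)] at hle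
  calc a * b ≤ a * a⁻¹ := by gcongr
    _ = 1 := mul_inv_cancel₀ ha.ne'

lemma hilbertDist_comm (C : Set X) (x y : X) : hilbertDist C x y = hilbertDist C y x := by
  rw [hilbertDist, hilbertDist, mul_comm]

lemma tanhDist_le_one : tanhDist C x y ≤ 1 := by
  unfold tanhDist
  split_ifs
  exacts [le_rfl, (tanh_lt_one _).le]

lemma tanhDist_le_sSup {L : X →ₗ[ℝ] X} (hx : x ∈ C \ {0}) (hy : y ∈ C \ {0}) :
    tanhDist C (L x) (L y) ≤
      sSup {t : ℝ | ∃ x ∈ C \ {0}, ∃ y ∈ C \ {0}, t = tanhDist C (L x) (L y)} :=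
  le_csSup ⟨1, by rintro _ ⟨_, -, _, -, rfl⟩; exact tanhDist_le_one⟩ ⟨x, hx, y, hy, rfl⟩

lemma tanhDist_eq_one_of_hilbertDist_eq_top (h : hilbertDist C x y = ⊤) : tanhDist C x y = 1 :=
  if_pos h

lemma tanhDist_eq_of_hilbertBeta_eq (ha : 0 < a) (hb : 0 < b)
    (hxy : hilbertBeta C x y = ENNReal.ofReal a) (hyx : hilbertBeta C y x = ENNReal.ofReal b) :
    tanhDist C x y = tanh (log (a * b) / 4) := by
  have hdist : hilbertDist C x y = (log (a * b) : EReal) := by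
    rw [hilbertDist, hxy, hyx, ← ENNReal.ofReal_mul ha.le, ENNReal.log_ofReal_of_pos (by positivity)]
  rw [tanhDist, hdist, if_neg (EReal.coe_ne_top _), EReal.toReal_coe]

variable [TopologicalSpace X] [ContinuousSub X] [ContinuousSMul ℝ X]

lemma exists_hilbertBeta_eq (hC : IsClosed C) (hproper : C ∩ -C = {0}) (hy : y ∈ C \ {0})
    (hβ : hilbertBeta C x y ≠ ⊤) :
    ∃ m > 0, hilbertBeta C x y = ENNReal.ofReal m ∧ m • x - y ∈ C := by
  set K := {r : ℝ | 0 < r ∧ r • x - y ∈ C}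
  have hK : K.Nonempty := by
    by_contra! hK
    refine hβ (sInf_eq_top.2 ?_)
    rintro _ ⟨r, hr, rfl, hrC⟩
    exact (hK.subset ⟨hr, hrC⟩).elim
  have hbdd : BddBelow K := ⟨0, fun r hr => hr.1.le⟩
  have hclosed : IsClosed {r : ℝ | r • x - y ∈ C} :=
    hC.preimage ((continuous_id.smul continuous_const).sub continuous_const)
  have hmC : sInf K • x - y ∈ C :=
    closure_minimal (fun r hr => hr.2) hclosed (csInf_mem_closure hK hbdd)
  have hm : 0 < sInf K := by
    refine (le_csInf hK fun r hr => hr.1.le).lt_of_ne fun h0 => hy.2 (hproper.subset ⟨hy.1, ?_⟩)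
    simpa [← h0] using hmC
  refine ⟨sInf K, hm, le_antisymm (hilbertBeta_le_ofReal hm hmC) ?_, hmC⟩
  refine le_sInf ?_
  rintro _ ⟨r, hr, rfl, hrC⟩
  exact ENNReal.ofReal_le_ofReal (csInf_le hbdd ⟨hr, hrC⟩)

lemma hilbertBeta_ne_zero (hC : IsClosed C) (hproper : C ∩ -C = {0}) (hy : y ∈ C \ {0}) :
    hilbertBeta C x y ≠ 0 := by
  by_cases hβ : hilbertBeta C x y = ⊤
  · simp [hβ]
  obtain ⟨m, hm, hβm, -⟩ := exists_hilbertBeta_eq hC hproper hy hβ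
  simpa [hβm] using hm

lemma hilbertBeta_ne_top_of_hilbertDist_ne_top (hC : IsClosed C) (hproper : C ∩ -C = {0})
    (hx : x ∈ C \ {0}) (h : hilbertDist C x y ≠ ⊤) : hilbertBeta C x y ≠ ⊤ := by
  intro hβ
  refine h ?_
  rw [hilbertDist, hβ, ENNReal.top_mul (hilbertBeta_ne_zero hC hproper hx), ENNReal.log_top]

lemma tanhDist_le_of_hilbertBeta_le (hC : IsClosed C) (hproper : C ∩ -C = {0})
    (hp : p ∈ C \ {0}) (hq : q ∈ C \ {0}) (ha : 0 < a) (hb : 0 < b)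
    (hpq : hilbertBeta C p q ≤ ENNReal.ofReal a) (hqp : hilbertBeta C q p ≤ ENNReal.ofReal b) :
    tanhDist C p q ≤ tanh (log (a * b) / 4) := by
  obtain ⟨a', ha', hβpq, -⟩ :=
    exists_hilbertBeta_eq hC hproper hq (ne_top_of_le_ne_top ENNReal.ofReal_ne_top hpq)
  obtain ⟨b', hb', hβqp, -⟩ :=
    exists_hilbertBeta_eq hC hproper hp (ne_top_of_le_ne_top ENNReal.ofReal_ne_top hqp)
  rw [hβpq, ENNReal.ofReal_le_ofReal_iff ha.le] at hpq
  rw [hβqp, ENNReal.ofReal_le_ofReal_iff hb.le] at hqp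
  rw [tanhDist_eq_of_hilbertBeta_eq ha' hb' hβpq hβqp]
  exact tanh_le_tanh (by gcongr)

lemma tanhDist_le_tanhDist_smul_sub_mul (hC : IsClosed C) (hadd : ∀ x ∈ C, ∀ y ∈ C, x + y ∈ C)
    (hsmul : ∀ r : ℝ, 0 ≤ r → ∀ x ∈ C, r • x ∈ C) (hproper : C ∩ -C = {0})
    (hp : p ∈ C \ {0}) (hq : q ∈ C \ {0}) (ha : 0 < a) (hb : 0 < b)
    (hw₁ : a • p - q ∈ C \ {0}) (hw₂ : b • q - p ∈ C \ {0}) :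
    tanhDist C p q ≤ tanhDist C (a • p - q) (b • q - p) * tanh (log (a * b) / 4) := by
  by_cases htop : hilbertDist C (a • p - q) (b • q - p) = ⊤
  · rw [tanhDist_eq_one_of_hilbertDist_eq_top htop, one_mul]
    exact tanhDist_le_of_hilbertBeta_le hC hproper hp hq ha hb
      (hilbertBeta_le_ofReal ha hw₁.1) (hilbertBeta_le_ofReal hb hw₂.1)
  obtain ⟨B₁, hB₁, hβ₁₂, hB₁C⟩ := exists_hilbertBeta_eq hC hproper hw₂
    (hilbertBeta_ne_top_of_hilbertDist_ne_top hC hproper hw₁ htop)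
  obtain ⟨B₂, hB₂, hβ₂₁, hB₂C⟩ := exists_hilbertBeta_eq hC hproper hw₁
    (hilbertBeta_ne_top_of_hilbertDist_ne_top hC hproper hw₂ (hilbertDist_comm C _ _ ▸ htop))
  rw [tanhDist_eq_of_hilbertBeta_eq hB₁ hB₂ hβ₁₂ hβ₂₁]
  calc tanhDist C p q ≤ tanh (log ((1 + a * B₁) / (b + B₁) * ((1 + b * B₂) / (a + B₂))) / 4) :=
        tanhDist_le_of_hilbertBeta_le hC hproper hp hq (by positivity) (by positivity)
          (hilbertBeta_le_of_smul_sub_mem hsmul ha.le hb hB₁.le hB₁C)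
          (hilbertBeta_le_of_smul_sub_mem hsmul hb.le ha hB₂.le hB₂C)
    _ ≤ _ := tanh_log_div_four_le_mul ha hb hB₁ hB₂
          (one_le_mul_of_smul_sub_mem hadd hsmul hproper hp hb.le hw₁.1 hw₂.1)
          (one_le_mul_of_smul_sub_mem hadd hsmul hproper hw₁ hB₂.le hB₁C hB₂C)

end Cone

theorem stmt5_general {X : Type*} [AddCommGroup X] [Module ℝ X] [TopologicalSpace X]
    [IsTopologicalAddGroup X] [ContinuousSMul ℝ X]
    (C : Set X) (hCclosed : IsClosed C)
    (hadd : ∀ x ∈ C, ∀ y ∈ C, x + y ∈ C)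
    (hsmul : ∀ r : ℝ, 0 ≤ r → ∀ x ∈ C, r • x ∈ C)
    (hproper : C ∩ (-C) = {0})
    (L : X →ₗ[ℝ] X) (hL : ∀ x ∈ C \ {0}, L x ∈ C \ {0})
    (τ : ℝ)
    (hτ : τ = sSup {t : ℝ | ∃ x ∈ C \ {0}, ∃ y ∈ C \ {0}, t = tanhDist C (L x) (L y)})
    (x y : X) (hx : x ∈ C \ {0}) (hy : y ∈ C \ {0}) :
    tanhDist C (L x) (L y) ≤ τ * tanhDist C x y := by
  have h0 : (0 : X) ∈ C := by simpa using hsmul 0 le_rfl x hx.1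
  have hLC : ∀ z ∈ C, L z ∈ C := fun z hz => by
    rcases eq_or_ne z 0 with rfl | hz0
    exacts [by simpa using h0, (hL z ⟨hz, hz0⟩).1]
  by_cases htop : hilbertDist C x y = ⊤
  · simpa [tanhDist_eq_one_of_hilbertDist_eq_top htop, hτ] using tanhDist_le_sSup hx hy
  obtain ⟨a, ha, hβxy, hu⟩ := exists_hilbertBeta_eq hCclosed hproper hy
    (hilbertBeta_ne_top_of_hilbertDist_ne_top hCclosed hproper hx htop)
  obtain ⟨b, hb, hβyx, hv⟩ := exists_hilbertBeta_eq hCclosed hproper hx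
    (hilbertBeta_ne_top_of_hilbertDist_ne_top hCclosed hproper hy (hilbertDist_comm C x y ▸ htop))
  rw [tanhDist_eq_of_hilbertBeta_eq ha hb hβxy hβyx]
  rcases (one_le_mul_of_smul_sub_mem hadd hsmul hproper hx hb.le hu hv).eq_or_lt with hab | hab
  · have hLT := tanhDist_le_of_hilbertBeta_le hCclosed hproper (hL x hx) (hL y hy) ha hb
      (hilbertBeta_le_ofReal ha (by simpa using hLC _ hu))
      (hilbertBeta_le_ofReal hb (by simpa using hLC _ hv))
    simpa [← hab] using hLT
  have hu0 : a • x - y ≠ 0 := fun h =>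
    (mul_le_one_of_hilbertBeta_eq h0 ha hβyx (sub_eq_zero.1 h)).not_gt hab
  have hv0 : b • y - x ≠ 0 := fun h =>
    (mul_le_one_of_hilbertBeta_eq h0 hb hβxy (sub_eq_zero.1 h)).not_gt (mul_comm a b ▸ hab)
  calc tanhDist C (L x) (L y)
      ≤ tanhDist C (L (a • x - y)) (L (b • y - x)) * tanh (log (a * b) / 4) := by
        simpa using tanhDist_le_tanhDist_smul_sub_mul hCclosed hadd hsmul hproper (hL x hx)
          (hL y hy) ha hb (by simpa using hL _ ⟨hu, hu0⟩) (by simpa using hL _ ⟨hv, hv0⟩)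
    _ ≤ τ * tanh (log (a * b) / 4) := by
        have hT : 0 ≤ tanh (log (a * b) / 4) :=
          tanh_zero ▸ tanh_le_tanh (div_nonneg (log_nonneg hab.le) zero_le_four)
        exact mul_le_mul_of_nonneg_right (hτ ▸ tanhDist_le_sSup ⟨hu, hu0⟩ ⟨hv, hv0⟩) hT

/-- A linear map preserving `C \ {0}` contracts the `𝒯`-distance by the factor
`τ(L) = sup_{x,y ∈ C\{0}} 𝒯(Lx, Ly)`. -/
theorem stmt5 {X : Type*} [AddCommGroup X] [Module ℝ X] [TopologicalSpace X]
    [IsTopologicalAddGroup X] [ContinuousSMul ℝ X] [LocallyConvexSpace ℝ X]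
    (C : Set X) (hCclosed : IsClosed C)
    (hadd : ∀ x ∈ C, ∀ y ∈ C, x + y ∈ C)
    (hsmul : ∀ r : ℝ, 0 ≤ r → ∀ x ∈ C, r • x ∈ C)
    (hproper : C ∩ (-C) = {0})
    (L : X →ₗ[ℝ] X) (hL : ∀ x ∈ C \ {0}, L x ∈ C \ {0})
    (τ : ℝ)
    (hτ : τ = sSup {t : ℝ | ∃ x ∈ C \ {0}, ∃ y ∈ C \ {0}, t = tanhDist C (L x) (L y)})
    (x y : X) (hx : x ∈ C \ {0}) (hy : y ∈ C \ {0}) :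
    tanhDist C (L x) (L y) ≤ τ * tanhDist C x y :=
  stmt5_general C hCclosed hadd hsmul hproper L hL τ hτ x y hx hy
end

section
/- Let E be a metrizable topological space with Borel σ-algebra. A finite signed Borel measure μ on E is nonnegative if and only if ∫ f dμ ≥ 0 for every bounded continuous function f : E → ℝ₊. -/
/-!
Write `μ = μ⁺ - μ⁻` for the Jordan decomposition, so that `μ ≥ 0` exactly when `μ⁻ ≤ μ⁺`
setwise. On a metrizable space the indicator of a closed set `F` is the decreasing limit of
the bounded continuous functions `max (0, 1 - n · dist (·, F))`, so comparing the integrals of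
nonnegative bounded continuous functions compares `μ⁻ F` with `μ⁺ F`; since finite Borel
measures on a metrizable space are inner regular with respect to closed sets, the comparison
extends to all Borel sets.
-/

open MeasureTheory BoundedContinuousFunction
open scoped NNReal

namespace MeasureTheory

namespace Measure

variable {X : Type*} [TopologicalSpace X] [MeasurableSpace X] {μ ν : Measure X}

lemma le_of_forall_isClosed_measure_le [IsFiniteMeasure μ] [μ.WeaklyRegular]
    (h : ∀ F, IsClosed F → μ F ≤ ν F) : μ ≤ ν := by
  refine Measure.le_iff.mpr fun s hs ↦ ?_
  rw [hs.measure_eq_iSup_isClosed_of_ne_top (measure_ne_top μ s)]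
  exact iSup₂_le fun F hFs ↦ iSup_le fun hF ↦ (h F hF).trans (measure_mono hFs)

lemma measure_isClosed_le_of_forall_lintegral_le [HasOuterApproxClosed X]
    [OpensMeasurableSpace X] [IsFiniteMeasure μ] [IsFiniteMeasure ν]
    (h : ∀ f : X →ᵇ ℝ≥0, ∫⁻ x, f x ∂μ ≤ ∫⁻ x, f x ∂ν) {F : Set X} (hF : IsClosed F) :
    μ F ≤ ν F :=
  le_of_tendsto_of_tendsto' (HasOuterApproxClosed.tendsto_lintegral_apprSeq hF μ)
    (HasOuterApproxClosed.tendsto_lintegral_apprSeq hF ν) fun _ ↦ h _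

lemma le_iff_forall_integral_le [TopologicalSpace.PseudoMetrizableSpace X]
    [BorelSpace X] [IsFiniteMeasure μ] [IsFiniteMeasure ν] :
    μ ≤ ν ↔ ∀ f : X → ℝ, Continuous f → (∃ M : ℝ, ∀ x, f x ≤ M) → (∀ x, 0 ≤ f x) →
      ∫ x, f x ∂μ ≤ ∫ x, f x ∂ν := by
  constructor
  · rintro hle f hf ⟨M, hfM⟩ hf₀
    have hfi : Integrable f ν := .of_bound hf.aestronglyMeasurable M <|
      .of_forall fun x ↦ by simpa [Real.norm_eq_abs, abs_of_nonneg (hf₀ x)] using hfM x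
    exact integral_mono_measure hle (.of_forall hf₀) hfi
  · intro h
    refine le_of_forall_isClosed_measure_le fun F hF ↦
      measure_isClosed_le_of_forall_lintegral_le (fun f ↦ ?_) hF
    have hf := h (fun x ↦ f x) (NNReal.continuous_coe.comp f.continuous)
      ⟨nndist 0 f, fun x ↦ mod_cast f.apply_le_nndist_zero x⟩ fun x ↦ (f x).coe_nonneg
    rwa [← ENNReal.toReal_le_toReal (lintegral_lt_top_of_nnreal μ f).ne
      (lintegral_lt_top_of_nnreal ν f).ne, toReal_lintegral_coe_eq_integral,
      toReal_lintegral_coe_eq_integral]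

end Measure

namespace SignedMeasure

variable {α : Type*} [MeasurableSpace α]

lemma nonneg_iff_negPart_le_posPart (s : SignedMeasure α) :
    0 ≤ s ↔ s.toJordanDecomposition.negPart ≤ s.toJordanDecomposition.posPart := by
  rw [VectorMeasure.le_iff, Measure.le_iff]
  refine forall₂_congr fun i hi ↦ ?_
  rw [zero_apply, s.apply_eq_posPart_real_sub_negPart_real hi, sub_nonneg,
    measureReal_def, measureReal_def, ENNReal.toReal_le_toReal (measure_ne_top _ _)
    (measure_ne_top _ _)]

end SignedMeasure

end MeasureTheory

/-- A finite signed Borel measure on a metrizable space is nonnegative if and only if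
`∫ f dμ ≥ 0` for every bounded continuous function `f : E → ℝ₊`. -/
theorem stmt8 {E : Type*} [TopologicalSpace E] [TopologicalSpace.MetrizableSpace E]
    [MeasurableSpace E] [BorelSpace E] (μ : SignedMeasure E) :
    0 ≤ μ ↔
      ∀ f : E → ℝ, Continuous f → (∃ M : ℝ, ∀ x, f x ≤ M) → (∀ x, 0 ≤ f x) →
        0 ≤ (∫ x, f x ∂μ.toJordanDecomposition.posPart)
              - ∫ x, f x ∂μ.toJordanDecomposition.negPart := by
  simp only [sub_nonneg]
  exact μ.nonneg_iff_negPart_le_posPart.trans Measure.le_iff_forall_integral_le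
end

section
/- For equivalent probability measures μ, ν with bounded Radon–Nikodym derivatives, the total variation distance satisfies ‖μ − ν‖_TV ≤ (2/log 3) · H(μ,ν), where H(μ,ν) = log(‖dμ/dν‖_∞ ‖dν/dμ‖_∞) and ‖μ − ν‖_TV = |μ−ν|(E) ∈ [0,2]. -/
/-!
For a Hahn set `P` of `μ - ν`, the total variation is `(μ P - ν P) + (ν Pᶜ - μ Pᶜ)`.
Writing `a = ‖dμ/dν‖_∞`, we have `ν ≥ μ / a`, so `μ P - ν P ≤ (1 - a⁻¹) μ P ≤ 1 - a⁻¹ ≤ log a`;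
symmetrically the second term is at most `log ‖dν/dμ‖_∞`. Hence `‖μ - ν‖_TV ≤ H`,
which is stronger than the claim because `2 / log 3 ≥ 1`.
-/

open MeasureTheory
open scoped ENNReal

namespace MeasureTheory

theorem SignedMeasure.exists_measurableSet_totalVariation_real_univ {α : Type*}
    [MeasurableSpace α] (s : SignedMeasure α) :
    ∃ i, MeasurableSet i ∧ s.totalVariation.real Set.univ = s i - s iᶜ := by
  obtain ⟨i, hi, hpos, hneg, hposPart, hnegPart⟩ := s.toJordanDecomposition_spec
  refine ⟨i, hi, ?_⟩
  rw [totalVariation, measureReal_add_apply, hposPart, hnegPart, measureReal_def,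
    measureReal_def, toMeasureOfZeroLE_apply _ hpos hi MeasurableSet.univ,
    toMeasureOfLEZero_apply _ hneg hi.compl MeasurableSet.univ]
  simp [sub_eq_add_neg]

section RnDeriv

variable {α : Type*} [MeasurableSpace α] {μ ν : Measure α}

theorem Measure.measure_le_essSup_rnDeriv_mul [IsFiniteMeasure μ] [SigmaFinite ν] (hμν : μ ≪ ν)
    (s : Set α) : μ s ≤ essSup (μ.rnDeriv ν) ν * ν s := by
  rw [← Measure.setLIntegral_rnDeriv hμν s]
  calc ∫⁻ x in s, μ.rnDeriv ν x ∂ν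
      ≤ ∫⁻ _ in s, essSup (μ.rnDeriv ν) ν ∂ν :=
        lintegral_mono_ae (ae_restrict_of_ae (ENNReal.ae_le_essSup _))
    _ = essSup (μ.rnDeriv ν) ν * ν s := setLIntegral_const _ _

theorem Measure.measureReal_le_essSup_rnDeriv_mul [IsFiniteMeasure μ] [IsFiniteMeasure ν]
    (hμν : μ ≪ ν) (h : essSup (μ.rnDeriv ν) ν ≠ ∞) (s : Set α) :
    μ.real s ≤ (essSup (μ.rnDeriv ν) ν).toReal * ν.real s := by
  rw [measureReal_def, measureReal_def, ← ENNReal.toReal_mul]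
  exact ENNReal.toReal_mono (ENNReal.mul_ne_top h (measure_ne_top ν s))
    (μ.measure_le_essSup_rnDeriv_mul hμν s)

variable [IsProbabilityMeasure μ] [IsProbabilityMeasure ν]

theorem Measure.one_le_toReal_essSup_rnDeriv (hμν : μ ≪ ν) (h : essSup (μ.rnDeriv ν) ν ≠ ∞) :
    1 ≤ (essSup (μ.rnDeriv ν) ν).toReal := by
  simpa using μ.measureReal_le_essSup_rnDeriv_mul hμν h Set.univ

theorem Measure.measureReal_sub_le_log_essSup_rnDeriv (hμν : μ ≪ ν)
    (h : essSup (μ.rnDeriv ν) ν ≠ ∞) (s : Set α) :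
    μ.real s - ν.real s ≤ Real.log (essSup (μ.rnDeriv ν) ν).toReal := by
  set a := (essSup (μ.rnDeriv ν) ν).toReal
  have ha : 1 ≤ a := μ.one_le_toReal_essSup_rnDeriv hμν h
  have hν : μ.real s * a⁻¹ ≤ ν.real s := by
    rw [mul_inv_le_iff₀ (by linarith), mul_comm]
    exact μ.measureReal_le_essSup_rnDeriv_mul hμν h s
  calc μ.real s - ν.real s ≤ μ.real s * (1 - a⁻¹) := by linarith
    _ ≤ 1 - a⁻¹ := mul_le_of_le_one_left (sub_nonneg.2 (inv_le_one_of_one_le₀ ha))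
        measureReal_le_one
    _ ≤ Real.log a := Real.one_sub_inv_le_log_of_pos (by linarith)

end RnDeriv

end MeasureTheory

/-- Atar–Zeitouni bound: for equivalent probability measures with bounded
Radon–Nikodym derivatives, `‖μ − ν‖_TV ≤ (2 / log 3) · H(μ,ν)`, where
`H(μ,ν) = log(‖dμ/dν‖_∞ ‖dν/dμ‖_∞)` and the total variation norm `|μ−ν|(E)`
is defined via the Hahn–Jordan decomposition (so it takes values in `[0,2]`). -/
theorem stmt12 {E : Type*} [MeasurableSpace E] (μ ν : Measure E)
    [IsProbabilityMeasure μ] [IsProbabilityMeasure ν] (hμν : μ ≪ ν) (hνμ : ν ≪ μ)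
    (h1 : essSup (μ.rnDeriv ν) ν ≠ ⊤) (h2 : essSup (ν.rnDeriv μ) μ ≠ ⊤)
    (H : ℝ)
    (hH : H = Real.log ((essSup (μ.rnDeriv ν) ν).toReal * (essSup (ν.rnDeriv μ) μ).toReal)) :
    (μ.toSignedMeasure - ν.toSignedMeasure).totalVariation Set.univ
      ≤ ENNReal.ofReal ((2 / Real.log 3) * H) := by
  obtain ⟨i, hi, htv⟩ :=
    (μ.toSignedMeasure - ν.toSignedMeasure).exists_measurableSet_totalVariation_real_univ
  have hTV : (μ.toSignedMeasure - ν.toSignedMeasure).totalVariation.real Set.univ ≤ H := by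
    rw [htv, Measure.toSignedMeasure_sub_apply hi, Measure.toSignedMeasure_sub_apply hi.compl,
      hH, Real.log_mul (by linarith [μ.one_le_toReal_essSup_rnDeriv hμν h1])
        (by linarith [ν.one_le_toReal_essSup_rnDeriv hνμ h2])]
    linarith [μ.measureReal_sub_le_log_essSup_rnDeriv hμν h1 i,
      ν.measureReal_sub_le_log_essSup_rnDeriv hνμ h2 iᶜ]
  have hlog3 : 1 ≤ 2 / Real.log 3 := by
    rw [one_le_div (Real.log_pos (by norm_num))]
    linarith [Real.log_le_sub_one_of_pos (show (0 : ℝ) < 3 by norm_num)]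
  have hH0 : 0 ≤ H := measureReal_nonneg.trans hTV
  rw [← ofReal_measureReal]
  exact ENNReal.ofReal_le_ofReal (hTV.trans (le_mul_of_one_le_left hH0 hlog3))
end

section
/- The space of probability measures on a measurable space, equipped with the Hilbert projective metric H (set to ∞ for non-comparable measures), is a complete metric space. -/
open MeasureTheory Filter
open scoped ENNReal

open scoped Classical in
/-- The Hilbert projective metric on (probability) measures:
`H(μ,ν) = log(‖dμ/dν‖_∞ ‖dν/dμ‖_∞)` when `μ ∼ ν` with essentially bounded
Radon–Nikodym derivatives, and `∞` otherwise; valued in `ℝ≥0∞`. -/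
noncomputable def hilbertDistMeas {E : Type*} [MeasurableSpace E] (μ ν : Measure E) : ℝ≥0∞ :=
  if μ ≪ ν ∧ ν ≪ μ ∧ essSup (μ.rnDeriv ν) ν ≠ ⊤ ∧ essSup (ν.rnDeriv μ) μ ≠ ⊤ then
    ENNReal.ofReal
      (Real.log ((essSup (μ.rnDeriv ν) ν).toReal * (essSup (ν.rnDeriv μ) μ).toReal))
  else ⊤

/-!
`H(μ, ν) ≤ 2δ` as soon as `μ ≤ e^δ ν` and `ν ≤ e^δ μ`, and conversely `H(μ, ν) < δ` forces
these two inequalities; so a Cauchy sequence `μ n` satisfies `μ m ≤ e^δ μ n` for all large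
`m, n`. Against a reference measure `ρ = μ N₀` the densities `fₙ = dμₙ/dρ` then satisfy
`f_m ≤ e^δ fₙ` a.e., and both inequalities pass to `g = limsup fₙ`. The limit is `ρ.withDensity g`,
whose total mass is squeezed between `e^{-δ}` and `e^δ` for every `δ > 0`.
-/

theorem ENNReal.le_mul_limsup_of_eventually_le {ι : Type*} {l : Filter ι} [l.NeBot]
    {u : ι → ℝ≥0∞} {b c : ℝ≥0∞} (hc : c ≠ ⊤) (h : ∀ᶠ i in l, b ≤ c * u i) :
    b ≤ c * limsup u l :=
  (le_limsup_of_frequently_le' h.frequently).trans_eq (ENNReal.limsup_const_mul_of_ne_top hc)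

theorem ENNReal.eq_one_of_forall_le_ofReal_exp {x : ℝ≥0∞}
    (h : ∀ δ > 0, x ≤ ENNReal.ofReal (Real.exp δ) ∧ 1 ≤ ENNReal.ofReal (Real.exp δ) * x) :
    x = 1 := by
  have hlim : Tendsto (fun δ ↦ ENNReal.ofReal (Real.exp δ)) (nhdsWithin (0 : ℝ) (Set.Ioi 0))
      (nhds 1) :=
    ((ENNReal.continuous_ofReal.comp Real.continuous_exp).tendsto' 0 1 (by simp)).mono_left
      nhdsWithin_le_nhds
  have hev : ∀ᶠ δ in nhdsWithin (0 : ℝ) (Set.Ioi 0),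
      x ≤ ENNReal.ofReal (Real.exp δ) ∧ 1 ≤ ENNReal.ofReal (Real.exp δ) * x :=
    eventually_nhdsWithin_of_forall h
  refine le_antisymm (ge_of_tendsto hlim (hev.mono fun _ h ↦ h.1)) ?_
  simpa using ge_of_tendsto (ENNReal.Tendsto.mul_const hlim (.inl one_ne_zero))
    (hev.mono fun _ h ↦ h.2)

namespace MeasureTheory.Measure

variable {α : Type*} [MeasurableSpace α] {μ ν ρ : Measure α} {c : ℝ≥0∞}

theorem essSup_rnDeriv_le_iff [μ.HaveLebesgueDecomposition ν] [SigmaFinite ν] (hμν : μ ≪ ν) :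
    essSup (μ.rnDeriv ν) ν ≤ c ↔ μ ≤ c • ν := by
  constructor
  · intro h
    calc μ = ν.withDensity (μ.rnDeriv ν) := (withDensity_rnDeriv_eq μ ν hμν).symm
      _ ≤ ν.withDensity fun _ ↦ c := withDensity_mono <| by
          filter_upwards [ENNReal.ae_le_essSup (μ.rnDeriv ν)] with x hx using hx.trans h
      _ = c • ν := withDensity_const c
  · intro h
    refine essSup_le_of_ae_le c <| ae_le_of_forall_setLIntegral_le_of_sigmaFinite
      (measurable_rnDeriv μ ν) fun s _ _ ↦ ?_
    calc ∫⁻ x in s, μ.rnDeriv ν x ∂ν ≤ μ s := setLIntegral_rnDeriv_le s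
      _ ≤ c * ν s := h s
      _ = ∫⁻ _ in s, c ∂ν := (setLIntegral_const s c).symm

theorem one_le_essSup_rnDeriv [IsProbabilityMeasure μ] [IsProbabilityMeasure ν] (hμν : μ ≪ ν) :
    1 ≤ essSup (μ.rnDeriv ν) ν :=
  calc 1 = ∫⁻ x, μ.rnDeriv ν x ∂ν := by rw [lintegral_rnDeriv hμν, measure_univ]
    _ ≤ ∫⁻ _, essSup (μ.rnDeriv ν) ν ∂ν := lintegral_mono_ae (ENNReal.ae_le_essSup _)
    _ = essSup (μ.rnDeriv ν) ν := by simp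

theorem rnDeriv_le_mul_rnDeriv_of_le_smul [SigmaFinite ρ] {μ₁ μ₂ : Measure α} [SigmaFinite μ₂]
    (h : μ₁ ≤ c • μ₂) (h₂ : μ₂ ≪ ρ) :
    μ₁.rnDeriv ρ ≤ᵐ[ρ] fun x ↦ c * μ₂.rnDeriv ρ x := by
  refine ae_le_of_forall_setLIntegral_le_of_sigmaFinite (measurable_rnDeriv μ₁ ρ) fun s _ _ ↦ ?_
  calc ∫⁻ x in s, μ₁.rnDeriv ρ x ∂ρ ≤ μ₁ s := setLIntegral_rnDeriv_le s
    _ ≤ c * μ₂ s := h s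
    _ = ∫⁻ x in s, c * μ₂.rnDeriv ρ x ∂ρ := by
      rw [lintegral_const_mul _ (measurable_rnDeriv μ₂ ρ), setLIntegral_rnDeriv h₂]

noncomputable def limsupRnDeriv (μ : ℕ → Measure α) (ρ : Measure α) : α → ℝ≥0∞ :=
  fun x ↦ limsup (fun n ↦ (μ n).rnDeriv ρ x) atTop

theorem le_smul_withDensity_limsupRnDeriv_and_le_smul [SigmaFinite ρ] {μ : ℕ → Measure α}
    [∀ n, SigmaFinite (μ n)] (hc : c ≠ ⊤) {N : ℕ} (hac : ∀ n ≥ N, μ n ≪ ρ)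
    (hcmp : ∀ m ≥ N, ∀ n ≥ N, μ m ≤ c • μ n) {n : ℕ} (hn : N ≤ n) :
    μ n ≤ c • ρ.withDensity (limsupRnDeriv μ ρ) ∧
      ρ.withDensity (limsupRnDeriv μ ρ) ≤ c • μ n := by
  have hg : Measurable (limsupRnDeriv μ ρ) := .limsup fun n ↦ measurable_rnDeriv (μ n) ρ
  have hdens : ∀ᵐ x ∂ρ, ∀ m ≥ N, ∀ n ≥ N, (μ m).rnDeriv ρ x ≤ c * (μ n).rnDeriv ρ x := by
    simp only [ae_all_iff]
    intro m hm n hn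
    exact rnDeriv_le_mul_rnDeriv_of_le_smul (hcmp m hm n hn) (hac n hn)
  have hle : ∀ᵐ x ∂ρ, limsupRnDeriv μ ρ x ≤ c * (μ n).rnDeriv ρ x :=
    hdens.mono fun x hx ↦ limsup_le_of_le (by isBoundedDefault) <|
      eventually_atTop.2 ⟨N, fun m hm ↦ hx m hm n hn⟩
  have hge : ∀ᵐ x ∂ρ, (μ n).rnDeriv ρ x ≤ c * limsupRnDeriv μ ρ x :=
    hdens.mono fun x hx ↦ ENNReal.le_mul_limsup_of_eventually_le hc <|
      eventually_atTop.2 ⟨N, fun m hm ↦ hx n hn m hm⟩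
  constructor
  · calc μ n = ρ.withDensity ((μ n).rnDeriv ρ) := (withDensity_rnDeriv_eq _ _ (hac n hn)).symm
      _ ≤ ρ.withDensity (c • limsupRnDeriv μ ρ) := withDensity_mono hge
      _ = c • ρ.withDensity (limsupRnDeriv μ ρ) := withDensity_smul c hg
  · calc ρ.withDensity (limsupRnDeriv μ ρ) ≤ ρ.withDensity (c • (μ n).rnDeriv ρ) :=
          withDensity_mono hle
      _ = c • ρ.withDensity ((μ n).rnDeriv ρ) := withDensity_smul c (measurable_rnDeriv _ _)
      _ = c • μ n := by rw [withDensity_rnDeriv_eq _ _ (hac n hn)]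

theorem isProbabilityMeasure_of_forall_le_smul
    (h : ∀ δ > 0, ∃ μ : Measure α, IsProbabilityMeasure μ ∧
      μ ≤ ENNReal.ofReal (Real.exp δ) • ν ∧ ν ≤ ENNReal.ofReal (Real.exp δ) • μ) :
    IsProbabilityMeasure ν := by
  refine ⟨ENNReal.eq_one_of_forall_le_ofReal_exp fun δ hδ ↦ ?_⟩
  obtain ⟨μ, hμ, hμν, hνμ⟩ := h δ hδ
  constructor
  · simpa using hνμ Set.univ
  · simpa using hμν Set.univ

end MeasureTheory.Measure

section HilbertDist

open Measure

variable {E : Type*} [MeasurableSpace E] {μ ν : Measure E} {δ : ℝ}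

theorem le_smul_of_hilbertDistMeas_lt [IsProbabilityMeasure μ] [IsProbabilityMeasure ν]
    (h : hilbertDistMeas μ ν < ENNReal.ofReal δ) :
    μ ≤ ENNReal.ofReal (Real.exp δ) • ν ∧ ν ≤ ENNReal.ofReal (Real.exp δ) • μ := by
  unfold hilbertDistMeas at h
  split_ifs at h with hfin
  swap
  · exact absurd h not_top_lt
  obtain ⟨hμν, hνμ, ha, hb⟩ := hfin
  have hlog := (ENNReal.ofReal_lt_ofReal_iff'.1 h).1
  -- each factor is at least `1`, so each is at most the product `< e^δ`
  have bound : ∀ {a b : ℝ≥0∞}, a ≠ ⊤ → 1 ≤ a → 1 ≤ b → b ≠ ⊤ →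
      Real.log (a.toReal * b.toReal) < δ → a ≤ ENNReal.ofReal (Real.exp δ) := by
    intro a b ha ha1 hb1 hb hab
    have ha1' : 1 ≤ a.toReal := by simpa using ENNReal.toReal_mono ha ha1
    have hb1' : 1 ≤ b.toReal := by simpa using ENNReal.toReal_mono hb hb1
    rw [ENNReal.le_ofReal_iff_toReal_le ha (Real.exp_pos δ).le]
    calc a.toReal ≤ a.toReal * b.toReal := le_mul_of_one_le_right (by linarith) hb1'
      _ = Real.exp (Real.log (a.toReal * b.toReal)) := (Real.exp_log (by nlinarith)).symm
      _ ≤ Real.exp δ := Real.exp_le_exp.2 hab.le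
  constructor
  · exact (essSup_rnDeriv_le_iff hμν).1 <|
      bound ha (one_le_essSup_rnDeriv hμν) (one_le_essSup_rnDeriv hνμ) hb hlog
  · exact (essSup_rnDeriv_le_iff hνμ).1 <|
      bound hb (one_le_essSup_rnDeriv hνμ) (one_le_essSup_rnDeriv hμν) ha (by rwa [mul_comm])

theorem hilbertDistMeas_le_of_le_smul [SigmaFinite μ] [SigmaFinite ν] (hδ : 0 ≤ δ)
    (hμν : μ ≤ ENNReal.ofReal (Real.exp δ) • ν) (hνμ : ν ≤ ENNReal.ofReal (Real.exp δ) • μ) :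
    hilbertDistMeas μ ν ≤ ENNReal.ofReal (2 * δ) := by
  have ha := (essSup_rnDeriv_le_iff (absolutelyContinuous_of_le_smul hμν)).2 hμν
  have hb := (essSup_rnDeriv_le_iff (absolutelyContinuous_of_le_smul hνμ)).2 hνμ
  rw [hilbertDistMeas, if_pos ⟨absolutelyContinuous_of_le_smul hμν,
    absolutelyContinuous_of_le_smul hνμ, ne_top_of_le_ne_top ENNReal.ofReal_ne_top ha,
    ne_top_of_le_ne_top ENNReal.ofReal_ne_top hb⟩]
  refine ENNReal.ofReal_le_ofReal ?_
  have hprod : (essSup (μ.rnDeriv ν) ν).toReal * (essSup (ν.rnDeriv μ) μ).toReal ≤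
      Real.exp (2 * δ) := by
    rw [two_mul, Real.exp_add]
    exact mul_le_mul (ENNReal.toReal_le_of_le_ofReal (Real.exp_pos δ).le ha)
      (ENNReal.toReal_le_of_le_ofReal (Real.exp_pos δ).le hb) ENNReal.toReal_nonneg
      (Real.exp_pos δ).le
  rcases (mul_nonneg ENNReal.toReal_nonneg ENNReal.toReal_nonneg).eq_or_lt with h0 | hpos
  · rw [← h0, Real.log_zero]
    positivity
  · exact (Real.log_le_iff_le_exp hpos).2 hprod

end HilbertDist

/-- The space of probability measures equipped with the Hilbert projective metric is a
complete (extended) metric space: every Cauchy sequence converges to a probability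
measure in the Hilbert metric. -/
theorem stmt13 {E : Type*} [MeasurableSpace E] (μ : ℕ → Measure E)
    (hprob : ∀ n, IsProbabilityMeasure (μ n))
    (hcauchy : ∀ ε : ℝ, 0 < ε → ∃ N : ℕ, ∀ m ≥ N, ∀ n ≥ N,
      hilbertDistMeas (μ m) (μ n) < ENNReal.ofReal ε) :
    ∃ ν : Measure E, IsProbabilityMeasure ν ∧
      ∀ ε : ℝ, 0 < ε → ∃ N : ℕ, ∀ n ≥ N, hilbertDistMeas (μ n) ν < ENNReal.ofReal ε := by
  have hcmp : ∀ δ > 0, ∃ N, ∀ m ≥ N, ∀ n ≥ N, μ m ≤ ENNReal.ofReal (Real.exp δ) • μ n :=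
    fun δ hδ ↦ (hcauchy δ hδ).imp fun N hN m hm n hn ↦
      (le_smul_of_hilbertDistMeas_lt (hN m hm n hn)).1
  obtain ⟨N₀, hN₀⟩ := hcmp 1 one_pos
  set ν := (μ N₀).withDensity (Measure.limsupRnDeriv μ (μ N₀))
  have hlim : ∀ δ > 0, ∃ N, ∀ n ≥ N,
      μ n ≤ ENNReal.ofReal (Real.exp δ) • ν ∧ ν ≤ ENNReal.ofReal (Real.exp δ) • μ n := by
    intro δ hδ
    obtain ⟨N, hN⟩ := hcmp δ hδ
    refine ⟨max N₀ N, fun n hn ↦ Measure.le_smul_withDensity_limsupRnDeriv_and_le_smul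
      ENNReal.ofReal_ne_top (fun k hk ↦ ?_) (fun k hk m hm ↦ ?_) hn⟩
    · exact Measure.absolutelyContinuous_of_le_smul (hN₀ k (le_of_max_le_left hk) N₀ le_rfl)
    · exact hN k (le_of_max_le_right hk) m (le_of_max_le_right hm)
  have hν : IsProbabilityMeasure ν := Measure.isProbabilityMeasure_of_forall_le_smul
    fun δ hδ ↦ (hlim δ hδ).elim fun N hN ↦ ⟨μ N, hprob N, hN N le_rfl⟩
  refine ⟨ν, hν, fun ε hε ↦ ?_⟩
  obtain ⟨N, hN⟩ := hlim (ε / 3) (by positivity)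
  refine ⟨N, fun n hn ↦ (hilbertDistMeas_le_of_le_smul (by positivity) (hN n hn).1
    (hN n hn).2).trans_lt ?_⟩
  exact (ENNReal.ofReal_lt_ofReal_iff hε).2 (by linarith)
end

section
/- If (μ_n) is a sequence of probability measures converging to μ in the Hilbert metric, then for every f-divergence D_f (f convex, f(1)=0, f finite on (0,∞)), both D_f(μ_n ‖ μ) → 0 and D_f(μ ‖ μ_n) → 0. -/
/-!
Hilbert distance below `log c` (with `c > 1`) squeezes the Radon–Nikodym derivative between `c⁻¹`
and `c` almost everywhere: the two essential suprema are at least `1` (the densities integrate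
to `1`) and their product is below `c`, while the reciprocal of `dμ/dν` is `dν/dμ`. Convergence
in the Hilbert metric therefore makes both densities converge to `1` essentially uniformly,
and since a convex `f` is continuous at the interior point `1`, where it vanishes, the integrands
`f(dμₙ/dμ)` and `f(dμ/dμₙ)` become uniformly small.
-/

open MeasureTheory Filter
open scoped ENNReal Topology

open Set

section RnDeriv

variable {E : Type*} [MeasurableSpace E] {μ ν : Measure E}

lemma one_le_essSup_rnDeriv [IsProbabilityMeasure μ] [IsProbabilityMeasure ν] (hμν : μ ≪ ν) :
    1 ≤ essSup (μ.rnDeriv ν) ν :=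
  calc (1 : ℝ≥0∞) = ∫⁻ x, μ.rnDeriv ν x ∂ν := by simp [Measure.lintegral_rnDeriv hμν]
    _ ≤ ∫⁻ _, essSup (μ.rnDeriv ν) ν ∂ν := lintegral_mono_ae (ENNReal.ae_le_essSup _)
    _ = essSup (μ.rnDeriv ν) ν := by simp

lemma ae_inv_rnDeriv_le_essSup [SigmaFinite μ] [SigmaFinite ν] (hνμ : ν ≪ μ) :
    ∀ᵐ x ∂ν, (μ.rnDeriv ν x)⁻¹ ≤ essSup (ν.rnDeriv μ) μ := by
  filter_upwards [Measure.inv_rnDeriv' hνμ, hνμ.ae_le (ENNReal.ae_le_essSup (ν.rnDeriv μ))]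
    with x hinv hle
  rwa [← Pi.inv_apply, hinv]

lemma hilbertDistMeas_comm (μ ν : Measure E) : hilbertDistMeas μ ν = hilbertDistMeas ν μ := by
  unfold hilbertDistMeas
  congr 1
  · exact propext (by tauto)
  · rw [mul_comm]

lemma essSup_rnDeriv_lt_of_hilbertDistMeas_lt [IsProbabilityMeasure μ] [IsProbabilityMeasure ν]
    {c : ℝ} (hc : 1 < c) (h : hilbertDistMeas μ ν < ENNReal.ofReal (Real.log c)) :
    μ ≪ ν ∧ ν ≪ μ ∧ essSup (μ.rnDeriv ν) ν < ENNReal.ofReal c ∧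
      essSup (ν.rnDeriv μ) μ < ENNReal.ofReal c := by
  unfold hilbertDistMeas at h
  split_ifs at h with hfin
  case neg => simp at h
  obtain ⟨hμν, hνμ, hA, hB⟩ := hfin
  set A := essSup (μ.rnDeriv ν) ν
  set B := essSup (ν.rnDeriv μ) μ
  have hA1 : 1 ≤ A.toReal := by simpa using ENNReal.toReal_mono hA (one_le_essSup_rnDeriv hμν)
  have hB1 : 1 ≤ B.toReal := by simpa using ENNReal.toReal_mono hB (one_le_essSup_rnDeriv hνμ)
  have hAB : A.toReal * B.toReal < c := by
    rw [ENNReal.ofReal_lt_ofReal_iff (Real.log_pos hc)] at h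
    exact (Real.log_lt_log_iff (by positivity) (by linarith)).1 h
  refine ⟨hμν, hνμ, ?_, ?_⟩
  · rw [← ENNReal.ofReal_toReal hA, ENNReal.ofReal_lt_ofReal_iff (by linarith)]
    nlinarith
  · rw [← ENNReal.ofReal_toReal hB, ENNReal.ofReal_lt_ofReal_iff (by linarith)]
    nlinarith

lemma ae_rnDeriv_mem_Icc_of_hilbertDistMeas_lt [IsProbabilityMeasure μ] [IsProbabilityMeasure ν]
    {c : ℝ} (hc : 1 < c) (h : hilbertDistMeas μ ν < ENNReal.ofReal (Real.log c)) :
    ∀ᵐ x ∂ν, (μ.rnDeriv ν x).toReal ∈ Icc c⁻¹ c := by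
  obtain ⟨-, hνμ, hA, hB⟩ := essSup_rnDeriv_lt_of_hilbertDistMeas_lt hc h
  filter_upwards [ENNReal.ae_le_essSup (μ.rnDeriv ν), ae_inv_rnDeriv_le_essSup hνμ]
    with x hup hlow
  have hup' : μ.rnDeriv ν x ≤ ENNReal.ofReal c := hup.trans hA.le
  have hlow' : ENNReal.ofReal c⁻¹ ≤ μ.rnDeriv ν x := by
    rw [ENNReal.ofReal_inv_of_pos (by linarith), ENNReal.inv_le_iff_inv_le]
    exact hlow.trans hB.le
  constructor
  · simpa [ENNReal.toReal_ofReal (inv_nonneg.2 (zero_le_one.trans hc.le))] using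
      ENNReal.toReal_mono (ne_top_of_le_ne_top ENNReal.ofReal_ne_top hup') hlow'
  · simpa [show (0 : ℝ) ≤ c by linarith] using ENNReal.toReal_mono ENNReal.ofReal_ne_top hup'

lemma eventually_ae_abs_toReal_rnDeriv_sub_one_le {ι : Type*} {l : Filter ι}
    {μ ν : ι → Measure E} [∀ i, IsProbabilityMeasure (μ i)] [∀ i, IsProbabilityMeasure (ν i)]
    (h : Tendsto (fun i => hilbertDistMeas (μ i) (ν i)) l (𝓝 0)) {δ : ℝ} (hδ : 0 < δ) :
    ∀ᶠ i in l, ∀ᵐ x ∂ν i, |((μ i).rnDeriv (ν i) x).toReal - 1| ≤ δ := by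
  have hlog : 0 < ENNReal.ofReal (Real.log (1 + δ)) :=
    ENNReal.ofReal_pos.2 (Real.log_pos (by linarith))
  filter_upwards [h.eventually (gt_mem_nhds hlog)] with i hi
  filter_upwards [ae_rnDeriv_mem_Icc_of_hilbertDistMeas_lt (by linarith) hi] with x ⟨hlow, hup⟩
  have : 1 - δ ≤ (1 + δ)⁻¹ := by
    rw [← one_div, le_div_iff₀ (by linarith)]
    nlinarith
  rw [abs_sub_le_iff]
  constructor <;> linarith

end RnDeriv

lemma tendsto_integral_of_eventually_ae_norm_le {E ι G : Type*} [MeasurableSpace E]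
    [NormedAddCommGroup G] [NormedSpace ℝ G] {l : Filter ι} {ν : ι → Measure E}
    [∀ i, IsProbabilityMeasure (ν i)] {g : ι → E → G}
    (hg : ∀ ε > 0, ∀ᶠ i in l, ∀ᵐ x ∂ν i, ‖g i x‖ ≤ ε) :
    Tendsto (fun i => ∫ x, g i x ∂ν i) l (𝓝 0) := by
  refine Metric.tendsto_nhds.2 fun ε hε => ?_
  filter_upwards [hg (ε / 2) (half_pos hε)] with i hi
  calc dist (∫ x, g i x ∂ν i) 0 ≤ ε / 2 * (ν i).real univ := by
        simpa only [dist_zero_right] using norm_integral_le_of_norm_le_const hi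
    _ < ε := by simp [hε]

lemma tendsto_integral_comp_of_eventually_ae_abs_sub_le {E ι : Type*} [MeasurableSpace E]
    {l : Filter ι} {ν : ι → Measure E} [∀ i, IsProbabilityMeasure (ν i)] {g : ι → E → ℝ}
    {f : ℝ → ℝ} {a : ℝ} (hf : ContinuousAt f a) (hfa : f a = 0)
    (hg : ∀ δ > 0, ∀ᶠ i in l, ∀ᵐ x ∂ν i, |g i x - a| ≤ δ) :
    Tendsto (fun i => ∫ x, f (g i x) ∂ν i) l (𝓝 0) := by
  refine tendsto_integral_of_eventually_ae_norm_le fun ε hε => ?_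
  obtain ⟨δ, hδ, hfδ⟩ := Metric.continuousAt_iff.1 hf ε hε
  filter_upwards [hg (δ / 2) (half_pos hδ)] with i hi
  filter_upwards [hi] with x hx
  have := hfδ (x := g i x) (by rw [Real.dist_eq]; linarith)
  rw [hfa, dist_zero_right] at this
  exact this.le

/-- If a sequence of probability measures `μ_n` converges to `μ` in the Hilbert metric,
then for every `f`-divergence `D_f` (with `f` convex on `ℝ₊` and `f(1) = 0`), both
`D_f(μ_n ‖ μ) → 0` and `D_f(μ ‖ μ_n) → 0`. -/
theorem stmt15 {E : Type*} [MeasurableSpace E] (μseq : ℕ → Measure E) (μ : Measure E)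
    (hprob : ∀ n, IsProbabilityMeasure (μseq n)) [IsProbabilityMeasure μ]
    (hconv : Tendsto (fun n => hilbertDistMeas (μseq n) μ) atTop (𝓝 0))
    (f : ℝ → ℝ) (hf : ConvexOn ℝ (Set.Ici 0) f) (hf1 : f 1 = 0) :
    Tendsto (fun n => ∫ x, f (((μseq n).rnDeriv μ x).toReal) ∂μ) atTop (𝓝 0) ∧
      Tendsto (fun n => ∫ x, f ((μ.rnDeriv (μseq n) x).toReal) ∂(μseq n)) atTop (𝓝 0) := by
  have hf_cont : ContinuousAt f 1 :=
    hf.continuousOn_interior.continuousAt (by simpa only [interior_Ici] using Ioi_mem_nhds one_pos)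
  have hconv' : Tendsto (fun n => hilbertDistMeas μ (μseq n)) atTop (𝓝 0) := by
    simpa only [hilbertDistMeas_comm μ] using hconv
  exact ⟨tendsto_integral_comp_of_eventually_ae_abs_sub_le hf_cont hf1
      fun _ hδ => eventually_ae_abs_toReal_rnDeriv_sub_one_le (ν := fun _ => μ) hconv hδ,
    tendsto_integral_comp_of_eventually_ae_abs_sub_le hf_cont hf1
      fun _ hδ => eventually_ae_abs_toReal_rnDeriv_sub_one_le (μ := fun _ => μ) hconv' hδ⟩
end

section
/- For a strictly positive n×n matrix A, the exponential of the projective diameter Δ(A) = sup over x, y in ℝ₊ⁿ \ {0} of H(Ax, Ay) equals max over indices i,j,k,l of (A_{ik} A_{jl})/(A_{jk} A_{il}); hence Birkhoff's contraction coefficient is τ(A) = tanh(Δ(A)/4) = (1 − √φ(A))/(1 + √φ(A)) with φ(A) = min_{i,j,k,l} A_{ik}A_{jl}/(A_{jk}A_{il}). -/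
/-!
For positive vectors, `(Ax)ᵢ ≤ (max_k A_ik / A_jk) (Ax)ⱼ`, so the two maxima in the Hilbert
metric between `Ax` and `Ay` are bounded by row-ratio maxima whose product is a cross ratio
of `A`; the bound is attained by two standard basis vectors, which gives `exp Δ(A)`.
Since swapping `k` and `l` inverts a cross ratio, `φ(A) = exp (-Δ(A))`, and
`tanh (Δ/4) = (1 - e^{-Δ/2}) / (1 + e^{-Δ/2})` is the formula for `τ(A)`.
-/

open Matrix Real

section Finite

variable {ι₁ ι₂ ι₃ ι₄ α : Type*} [Finite ι₁] [Finite ι₂] [Finite ι₃] [Finite ι₄]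
  [ConditionallyCompleteLinearOrder α]

lemma Finite.ciSup₄_eq_ciSup_prod (f : ι₁ → ι₂ → ι₃ → ι₄ → α) :
    ⨆ i, ⨆ j, ⨆ k, ⨆ l, f i j k l = ⨆ p : ι₁ × ι₂ × ι₃ × ι₄, f p.1 p.2.1 p.2.2.1 p.2.2.2 := by
  simp only [Finite.ciSup_prod]

lemma Finite.le_ciSup₄ (f : ι₁ → ι₂ → ι₃ → ι₄ → α) (i : ι₁) (j : ι₂) (k : ι₃) (l : ι₄) :
    f i j k l ≤ ⨆ i, ⨆ j, ⨆ k, ⨆ l, f i j k l := by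
  rw [Finite.ciSup₄_eq_ciSup_prod]
  exact Finite.le_ciSup (fun p : ι₁ × ι₂ × ι₃ × ι₄ ↦ f p.1 p.2.1 p.2.2.1 p.2.2.2) (i, j, k, l)

lemma Finite.ciInf₄_le (f : ι₁ → ι₂ → ι₃ → ι₄ → α) (i : ι₁) (j : ι₂) (k : ι₃) (l : ι₄) :
    ⨅ i, ⨅ j, ⨅ k, ⨅ l, f i j k l ≤ f i j k l :=
  Finite.le_ciSup₄ (α := αᵒᵈ) f i j k l

variable [Nonempty ι₁] [Nonempty ι₂] [Nonempty ι₃] [Nonempty ι₄]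

lemma exists_eq_ciSup₄_of_finite (f : ι₁ → ι₂ → ι₃ → ι₄ → α) :
    ∃ i j k l, f i j k l = ⨆ i, ⨆ j, ⨆ k, ⨆ l, f i j k l := by
  rw [Finite.ciSup₄_eq_ciSup_prod]
  obtain ⟨⟨i, j, k, l⟩, h⟩ :=
    exists_eq_ciSup_of_finite (f := fun p : ι₁ × ι₂ × ι₃ × ι₄ ↦ f p.1 p.2.1 p.2.2.1 p.2.2.2)
  exact ⟨i, j, k, l, h⟩

lemma exists_eq_ciInf₄_of_finite (f : ι₁ → ι₂ → ι₃ → ι₄ → α) :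
    ∃ i j k l, f i j k l = ⨅ i, ⨅ j, ⨅ k, ⨅ l, f i j k l :=
  exists_eq_ciSup₄_of_finite (α := αᵒᵈ) f

end Finite

section CrossRatio

variable {m n : Type*} {A : Matrix m n ℝ}

noncomputable def Matrix.crossRatio (A : Matrix m n ℝ) (i j : m) (k l : n) : ℝ :=
  A i k * A j l / (A j k * A i l)

lemma Matrix.crossRatio_pos (hA : ∀ i j, 0 < A i j) (i j : m) (k l : n) :
    0 < A.crossRatio i j k l := by
  unfold crossRatio
  have := hA i k; have := hA j l; have := hA j k; have := hA i l
  positivity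

lemma Matrix.crossRatio_mul_crossRatio_swap (hA : ∀ i j, 0 < A i j) (i j : m) (k l : n) :
    A.crossRatio i j k l * A.crossRatio i j l k = 1 := by
  unfold crossRatio
  have := (hA i k).ne'; have := (hA j l).ne'; have := (hA j k).ne'; have := (hA i l).ne'
  field_simp

lemma Matrix.iInf_crossRatio_mul_iSup_crossRatio [Finite m] [Finite n] [Nonempty m]
    [Nonempty n] (hA : ∀ i j, 0 < A i j) :
    (⨅ i, ⨅ j, ⨅ k, ⨅ l, A.crossRatio i j k l) *
      (⨆ i, ⨆ j, ⨆ k, ⨆ l, A.crossRatio i j k l) = 1 := by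
  obtain ⟨i, j, k, l, hmin⟩ := exists_eq_ciInf₄_of_finite A.crossRatio
  obtain ⟨i', j', k', l', hmax⟩ := exists_eq_ciSup₄_of_finite A.crossRatio
  rw [← hmin, ← hmax]
  apply le_antisymm
  · calc A.crossRatio i j k l * A.crossRatio i' j' k' l'
        ≤ A.crossRatio i' j' l' k' * A.crossRatio i' j' k' l' := by
          gcongr
          · exact (crossRatio_pos hA _ _ _ _).le
          · exact hmin ▸ Finite.ciInf₄_le A.crossRatio i' j' l' k'
      _ = 1 := by rw [mul_comm, crossRatio_mul_crossRatio_swap hA]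
  · calc 1 = A.crossRatio i j k l * A.crossRatio i j l k :=
          (crossRatio_mul_crossRatio_swap hA i j k l).symm
      _ ≤ A.crossRatio i j k l * A.crossRatio i' j' k' l' := by
          gcongr
          · exact (crossRatio_pos hA _ _ _ _).le
          · exact hmax ▸ Finite.le_ciSup₄ A.crossRatio i j l k

end CrossRatio

section Matrix

variable {m n : Type*} [Fintype n]

lemma Matrix.mulVec_apply_le_mul_of_row_le {R : Type*} [CommSemiring R] [PartialOrder R]
    [IsOrderedRing R] {A : Matrix m n R} {x : n → R} (hx : 0 ≤ x) {i j : m} {c : R}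
    (h : ∀ k, A i k ≤ c * A j k) : (A *ᵥ x) i ≤ c * (A *ᵥ x) j := by
  simp only [mulVec, dotProduct, Finset.mul_sum, ← mul_assoc]
  exact Finset.sum_le_sum fun k _ ↦ mul_le_mul_of_nonneg_right (h k) (hx k)

lemma Matrix.mulVec_apply_pos {A : Matrix m n ℝ} (hA : ∀ i j, 0 < A i j) {x : n → ℝ}
    (hx : 0 ≤ x) (hx0 : x ≠ 0) (i : m) : 0 < (A *ᵥ x) i := by
  obtain ⟨k, hk⟩ := Function.ne_iff.mp hx0
  exact Finset.sum_pos' (fun j _ ↦ mul_nonneg (hA i j).le (hx j))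
    ⟨k, Finset.mem_univ k, mul_pos (hA i k) ((hx k).lt_of_ne' hk)⟩

lemma Matrix.exists_mulVec_apply_le_mul {A : Matrix m n ℝ} (hA : ∀ i j, 0 < A i j)
    [Nonempty n] {x : n → ℝ} (hx : 0 ≤ x) (i j : m) :
    ∃ k, (A *ᵥ x) i ≤ A i k / A j k * (A *ᵥ x) j := by
  obtain ⟨k, hk⟩ := Finite.exists_max fun k ↦ A i k / A j k
  exact ⟨k, mulVec_apply_le_mul_of_row_le hx fun k' ↦ (div_le_iff₀ (hA j k')).1 (hk k')⟩

end Matrix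

section Hilbert

variable {m n : Type*} [Fintype m] {A : Matrix m n ℝ}

/-- `exp (H u v)` for the Hilbert projective metric `H`, when `u` and `v` are positive. -/
noncomputable def expHilbertDist (u v : m → ℝ) : ℝ :=
  (⨆ i, u i / v i) * ⨆ j, v j / u j

lemma crossRatio_le_expHilbertDist_col (hA : ∀ i j, 0 < A i j) (i j : m) (k l : n) :
    A.crossRatio i j k l ≤ expHilbertDist (A.col k) (A.col l) := by
  have := hA i k; have := hA j l; have := hA j k; have := hA i l
  have hi := Finite.le_ciSup (fun i ↦ A i k / A i l) i
  calc A.crossRatio i j k l = A i k / A i l * (A j l / A j k) := by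
        rw [crossRatio, div_mul_div_comm, mul_comm (A i l)]
    _ ≤ expHilbertDist (A.col k) (A.col l) :=
        mul_le_mul hi (Finite.le_ciSup (fun j ↦ A j l / A j k) j) (by positivity)
          ((by positivity : (0 : ℝ) ≤ A i k / A i l).trans hi)

variable [Nonempty m]

lemma expHilbertDist_pos {u v : m → ℝ} (hu : ∀ i, 0 < u i) (hv : ∀ i, 0 < v i) :
    0 < expHilbertDist u v := by
  obtain ⟨i, hi⟩ := exists_eq_ciSup_of_finite (f := fun i ↦ u i / v i)
  obtain ⟨j, hj⟩ := exists_eq_ciSup_of_finite (f := fun j ↦ v j / u j)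
  rw [expHilbertDist, ← hi, ← hj]
  have := hu i; have := hu j; have := hv i; have := hv j
  positivity

variable [Fintype n] [Nonempty n]

lemma expHilbertDist_mulVec_le (hA : ∀ i j, 0 < A i j) {x y : n → ℝ} (hx : 0 ≤ x)
    (hx0 : x ≠ 0) (hy : 0 ≤ y) (hy0 : y ≠ 0) :
    expHilbertDist (A *ᵥ x) (A *ᵥ y) ≤ ⨆ i, ⨆ j, ⨆ k, ⨆ l, A.crossRatio i j k l := by
  set u := A *ᵥ x
  set v := A *ᵥ y
  have hu := mulVec_apply_pos hA hx hx0
  have hv := mulVec_apply_pos hA hy hy0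
  obtain ⟨i, hi⟩ := exists_eq_ciSup_of_finite (f := fun i ↦ u i / v i)
  obtain ⟨j, hj⟩ := exists_eq_ciSup_of_finite (f := fun j ↦ v j / u j)
  obtain ⟨k, hk⟩ := exists_mulVec_apply_le_mul hA hx i j
  obtain ⟨l, hl⟩ := exists_mulVec_apply_le_mul hA hy j i
  calc expHilbertDist u v = u i * v j / (u j * v i) := by
        rw [expHilbertDist, ← hi, ← hj, div_mul_div_comm, mul_comm (v i)]
    _ ≤ A.crossRatio i j k l := by
        rw [div_le_iff₀ (mul_pos (hu j) (hv i))]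
        calc u i * v j ≤ (A i k / A j k * u j) * (A j l / A i l * v i) :=
              mul_le_mul hk hl (hv j).le (mul_pos (div_pos (hA i k) (hA j k)) (hu j)).le
          _ = A.crossRatio i j k l * (u j * v i) := by
              have := (hA j k).ne'; have := (hA i l).ne'
              rw [crossRatio]
              field_simp
    _ ≤ _ := Finite.le_ciSup₄ A.crossRatio i j k l

lemma isGreatest_log_expHilbertDist_mulVec (hA : ∀ i j, 0 < A i j) :
    IsGreatest {d : ℝ | ∃ x y : n → ℝ, 0 ≤ x ∧ x ≠ 0 ∧ 0 ≤ y ∧ y ≠ 0 ∧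
        d = log (expHilbertDist (A *ᵥ x) (A *ᵥ y))}
      (log (⨆ i, ⨆ j, ⨆ k, ⨆ l, A.crossRatio i j k l)) := by
  classical
  obtain ⟨i, j, k, l, hR⟩ := exists_eq_ciSup₄_of_finite A.crossRatio
  have hpos : (0 : n → ℝ) ≤ Pi.single k 1 ∧ (0 : n → ℝ) ≤ Pi.single l 1 :=
    ⟨Pi.single_nonneg.2 zero_le_one, Pi.single_nonneg.2 zero_le_one⟩
  have hne : (Pi.single k 1 : n → ℝ) ≠ 0 ∧ (Pi.single l 1 : n → ℝ) ≠ 0 :=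
    ⟨Pi.single_ne_zero_iff.2 one_ne_zero, Pi.single_ne_zero_iff.2 one_ne_zero⟩
  refine ⟨⟨Pi.single k 1, Pi.single l 1, hpos.1, hne.1, hpos.2, hne.2, ?_⟩, ?_⟩
  · refine congrArg log (le_antisymm ?_ (expHilbertDist_mulVec_le hA hpos.1 hne.1 hpos.2 hne.2))
    rw [mulVec_single_one, mulVec_single_one, ← hR]
    exact crossRatio_le_expHilbertDist_col hA i j k l
  · rintro d ⟨x, y, hx, hx0, hy, hy0, rfl⟩
    have hpos := expHilbertDist_pos (mulVec_apply_pos hA hx hx0) (mulVec_apply_pos hA hy hy0)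
    exact log_le_log hpos (expHilbertDist_mulVec_le hA hx hx0 hy hy0)

end Hilbert

lemma Real.tanh_div_four_eq (t : ℝ) : tanh (t / 4) = (1 - √(exp (-t))) / (1 + √(exp (-t))) := by
  have h4 : exp (-(t / 4)) = (exp (t / 4))⁻¹ := exp_neg _
  have h2 : exp (-t / 2) = (exp (t / 4))⁻¹ ^ 2 := by
    rw [← h4, ← exp_nat_mul]
    ring_nf
  rw [← exp_half, tanh_eq, h4, h2]
  have := exp_pos (t / 4)
  field_simp

/-- For a strictly positive `n×n` matrix `A`, the exponential of the projective diameter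
`Δ(A) = sup_{x,y ∈ ℝ₊ⁿ\{0}} H(Ax, Ay)` equals `max_{i,j,k,l} (A_{ik} A_{jl})/(A_{jk} A_{il})`,
and Birkhoff's contraction coefficient is
`τ(A) = tanh(Δ(A)/4) = (1 − √φ(A))/(1 + √φ(A))` with
`φ(A) = min_{i,j,k,l} (A_{ik} A_{jl})/(A_{jk} A_{il})`.
Here `H(u,v) = log((max_i u_i/v_i) · (max_j v_j/u_j))` is the Hilbert projective metric. -/
theorem stmt17 {n : ℕ} [NeZero n] (A : Matrix (Fin n) (Fin n) ℝ)
    (hA : ∀ i j, 0 < A i j)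
    (Δ φ : ℝ)
    (hΔ : Δ = sSup {d : ℝ | ∃ x y : Fin n → ℝ,
      (∀ i, 0 ≤ x i) ∧ x ≠ 0 ∧ (∀ i, 0 ≤ y i) ∧ y ≠ 0 ∧
      d = Real.log ((⨆ i, A.mulVec x i / A.mulVec y i) * ⨆ j, A.mulVec y j / A.mulVec x j)})
    (hφ : φ = ⨅ i, ⨅ j, ⨅ k, ⨅ l, A i k * A j l / (A j k * A i l)) :
    Real.exp Δ = (⨆ i, ⨆ j, ⨆ k, ⨆ l, A i k * A j l / (A j k * A i l)) ∧
      Real.tanh (Δ / 4) = (1 - Real.sqrt φ) / (1 + Real.sqrt φ) := by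
  set R := ⨆ i, ⨆ j, ⨆ k, ⨆ l, A.crossRatio i j k l
  have hR : 0 < R :=
    (crossRatio_pos hA 0 0 0 0).trans_le (Finite.le_ciSup₄ A.crossRatio 0 0 0 0)
  have hΔR : Δ = log R := hΔ.trans (isGreatest_log_expHilbertDist_mulVec hA).csSup_eq
  have hφR : φ = R⁻¹ :=
    hφ.trans (eq_inv_of_mul_eq_one_left (iInf_crossRatio_mul_iSup_crossRatio hA))
  have hexp : exp Δ = R := by rw [hΔR, exp_log hR]
  exact ⟨hexp, by rw [tanh_div_four_eq, Real.exp_neg, hexp, hφR]⟩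
end

section
/- Let μ, ν be probability vectors in the interior of the n-simplex with Hilbert distance H(μ,ν) ≤ R. Then ‖μ − ν‖_{ℓ¹} = Σ_i |μ^i − ν^i| ≤ 2·tanh(R/4). -/
/-!
Let `M = max μᵢ/νᵢ` and `m = min μᵢ/νᵢ`, so that `m ν ≤ μ ≤ M ν` and `m ≤ 1 ≤ M`. Comparing
`(μᵢ - νᵢ)⁺` termwise with `(M - 1)(μᵢ - m νᵢ)/(M - m)` bounds half the `ℓ¹` distance by
`(M - 1)(1 - m)/(M - m)`. For a fixed ratio `M/m = e^H` this is largest at `m = e^{-H/2}`, where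
it equals `tanh (H/4)`.
-/

open Finset Real

namespace Real

@[gcongr]
theorem tanh_le_tanh_s18 {x y : ℝ} (h : x ≤ y) : tanh x ≤ tanh y := by
  rwa [← artanh_le_artanh_iff ⟨neg_one_lt_tanh x, tanh_lt_one x⟩
    ⟨neg_one_lt_tanh y, tanh_lt_one y⟩, artanh_tanh, artanh_tanh]

theorem tanh_log_div_two {x : ℝ} (hx : 0 < x) : tanh (log x / 2) = (x - 1) / (x + 1) := by
  have hsq : exp (log x / 2) * exp (log x / 2) = x := by
    rw [← exp_add, add_halves, exp_log hx]
  have hinv : ∀ e : ℝ, 0 < e → (e - e⁻¹) / (e + e⁻¹) = (e * e - 1) / (e * e + 1) :=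
    fun e he => by field_simp
  rw [tanh_eq, exp_neg, hinv _ (exp_pos _), hsq]

end Real

/-- With `s = √(M / m)`, the gap between the two sides is `(s m - 1)²`. -/
theorem mul_sub_le_tanh_log_div_mul {M m : ℝ} (hM : 0 < M) (hm : 0 < m) :
    (M - 1) * (1 - m) ≤ tanh (log (M / m) / 4) * (M - m) := by
  set s := √(M / m) with hs
  have hs0 : 0 ≤ s := sqrt_nonneg _
  have hMs : M = s ^ 2 * m := by
    rw [hs, sq_sqrt (div_pos hM hm).le, div_mul_cancel₀ _ hm.ne']
  have htanh : tanh (log (M / m) / 4) = (s - 1) / (s + 1) := by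
    rw [← tanh_log_div_two (sqrt_pos.2 (div_pos hM hm)), log_sqrt (div_pos hM hm).le]
    ring_nf
  rw [htanh, hMs, div_mul_eq_mul_div, le_div_iff₀ (by linarith)]
  nlinarith [sq_nonneg (s * m - 1), mul_nonneg hs0 (sq_nonneg (s * m - 1))]

section

variable {ι : Type*} [Fintype ι]

theorem sum_abs_sub_eq_two_mul_sum_posPart {μ ν : ι → ℝ} (h : ∑ i, μ i = ∑ i, ν i) :
    ∑ i, |μ i - ν i| = 2 * ∑ i, (μ i - ν i)⁺ := by
  have habs : ∀ x : ℝ, |x| = 2 * x⁺ - x := fun x => by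
    linarith [posPart_add_negPart x, posPart_sub_negPart x]
  simp only [habs, sum_sub_distrib, ← mul_sum, h, sub_self, sub_zero]

variable {μ ν : ι → ℝ} {M m : ℝ}

theorem sum_posPart_sub_mul_sub_le (hμ : ∑ i, μ i = 1) (hν : ∑ i, ν i = 1)
    (hup : ∀ i, μ i ≤ M * ν i) (hlo : ∀ i, m * ν i ≤ μ i) (hM : 1 ≤ M) (hm : m ≤ 1) :
    (∑ i, (μ i - ν i)⁺) * (M - m) ≤ (M - 1) * (1 - m) := by
  have hpt : ∀ i, (μ i - ν i)⁺ * (M - m) ≤ (M - 1) * (μ i - m * ν i) := fun i => by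
    rcases le_total (μ i - ν i) 0 with h | h
    · rw [posPart_eq_zero.2 h, zero_mul]
      exact mul_nonneg (by linarith) (by linarith [hlo i])
    · rw [posPart_eq_self.2 h]
      nlinarith [mul_le_mul_of_nonneg_left (hup i) (sub_nonneg.2 hm)]
  calc (∑ i, (μ i - ν i)⁺) * (M - m) = ∑ i, (μ i - ν i)⁺ * (M - m) := sum_mul ..
    _ ≤ ∑ i, (M - 1) * (μ i - m * ν i) := sum_le_sum fun i _ => hpt i
    _ = (M - 1) * (1 - m) := by rw [← mul_sum, sum_sub_distrib, ← mul_sum, hμ, hν, mul_one]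

theorem sum_posPart_sub_le_tanh (hμ : ∑ i, μ i = 1) (hν : ∑ i, ν i = 1)
    (hup : ∀ i, μ i ≤ M * ν i) (hlo : ∀ i, m * ν i ≤ μ i) (hm : 0 < m) :
    ∑ i, (μ i - ν i)⁺ ≤ tanh (log (M / m) / 4) := by
  have hM : 1 ≤ M := by
    simpa [hμ, hν, ← mul_sum] using sum_le_sum fun i (_ : i ∈ univ) => hup i
  have hm1 : m ≤ 1 := by
    simpa [hμ, hν, ← mul_sum] using sum_le_sum fun i (_ : i ∈ univ) => hlo i
  rcases hm1.trans hM |>.eq_or_lt with hMm | hMm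
  · have hM1 : M = 1 := le_antisymm (hMm ▸ hm1) hM
    have hμν : ∀ i, μ i ≤ ν i := fun i => by simpa [hM1] using hup i
    rw [← hMm, div_self hm.ne', log_one, zero_div, tanh_zero]
    exact (sum_eq_zero fun i _ => posPart_eq_zero.2 (sub_nonpos.2 (hμν i))).le
  · have key := (sum_posPart_sub_mul_sub_le hμ hν hup hlo hM hm1).trans
      (mul_sub_le_tanh_log_div_mul (by linarith) hm)
    exact le_of_mul_le_mul_right key (sub_pos.2 hMm)

end

/-- For probability vectors `μ, ν` in the interior of the `n`-simplex with Hilbert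
distance `H(μ,ν) = log((max_i μ_i/ν_i) · (max_j ν_j/μ_j)) ≤ R`, the `ℓ¹` distance
satisfies `‖μ − ν‖_{ℓ¹} ≤ 2 tanh (R/4)`. -/
theorem stmt18 {n : ℕ} (μ ν : Fin (n + 1) → ℝ)
    (hμpos : ∀ i, 0 < μ i) (hνpos : ∀ i, 0 < ν i)
    (hμsum : (∑ i, μ i) = 1) (hνsum : (∑ i, ν i) = 1)
    (R : ℝ)
    (hH : Real.log ((⨆ i, μ i / ν i) * ⨆ j, ν j / μ j) ≤ R) :
    (∑ i, |μ i - ν i|) ≤ 2 * Real.tanh (R / 4) := by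
  set M := ⨆ i, μ i / ν i
  set B := ⨆ j, ν j / μ j
  have hbdd (f : Fin (n + 1) → ℝ) : BddAbove (Set.range f) := (Set.finite_range f).bddAbove
  have hB : 0 < B :=
    (div_pos (hνpos 0) (hμpos 0)).trans_le (le_ciSup (hbdd fun j => ν j / μ j) 0)
  have hup (i) : μ i ≤ M * ν i :=
    (div_le_iff₀ (hνpos i)).1 (le_ciSup (hbdd fun j => μ j / ν j) i)
  have hlo (i) : B⁻¹ * ν i ≤ μ i := by
    rw [inv_mul_le_iff₀ hB]
    exact (div_le_iff₀ (hμpos i)).1 (le_ciSup (hbdd fun j => ν j / μ j) i)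
  calc ∑ i, |μ i - ν i| = 2 * ∑ i, (μ i - ν i)⁺ :=
        sum_abs_sub_eq_two_mul_sum_posPart (hμsum.trans hνsum.symm)
    _ ≤ 2 * tanh (log (M / B⁻¹) / 4) := by
        gcongr; exact sum_posPart_sub_le_tanh hμsum hνsum hup hlo (inv_pos.2 hB)
    _ ≤ 2 * tanh (R / 4) := by
        rw [div_inv_eq_mul]; gcongr
end
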